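/- arXiv:1101.4041 — 3 statements merged into one kernel-verified Lean document; each statement's English description precedes it below -/
import Mathlib

section
/- Let B > 0. There exists a constant C₁ > 0, depending only on q, Q and B, such that every B-bare weighted tree T with ω(T) ≥ C₁ satisfies both ω(v_base) ≥ ω(T) / (log ω(T))^{2B log Q} and D(T) ≥ log ω(T) / (2 log Q). -/
open MeasureTheory ProbabilityTheory Filter Set Real
open scoped ProbabilityTheory ENNReal

namespace GWW

abbrev Vertex : Type := List ℕ

instance : MeasurableSpace Vertex := ⊤

/-- The root vertex φ. -/
def rootV : Vertex := []

abbrev Conf : Type := (Vertex → ℕ) × (Vertex → ℝ)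

/-- The vertex set of the tree coded (in the Neveu–Le Gall formalism) by the
offspring-count function `K`. -/
def treeSet (K : Vertex → ℕ) : Set Vertex :=
  {u | ∀ j, j < u.length → u.getD j 0 < K (u.take j)}

lemma root_mem_treeSet (K : Vertex → ℕ) : ([] : Vertex) ∈ treeSet K := by
  intro j hj; simp at hj

/-- ω(u) : the product of the biases on the edges of the path from the root to `u`. -/
noncomputable def vWeight (β : Vertex → ℝ) (u : Vertex) : ℝ :=
  ∏ j ∈ Finset.range u.length, β (u.take (j + 1))

/-- ω_w(v) : the product of the biases on the path from `w` to a descendant `v`. -/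
noncomputable def vWeightFrom (β : Vertex → ℝ) (w v : Vertex) : ℝ :=
  ∏ j ∈ Finset.Ico w.length v.length, β (v.take (j + 1))

/-- ω(T) : the total weight of the tree. -/
noncomputable def treeWeight (K : Vertex → ℕ) (β : Vertex → ℝ) : ℝ :=
  ∑' u : treeSet K, vWeight β u

/-- D(T) : the depth of the tree. -/
noncomputable def depth (K : Vertex → ℕ) : ℕ :=
  sSup (List.length '' treeSet K)

/-- v_base : the lexicographically minimal vertex of maximal depth. -/
noncomputable def vbase (K : Vertex → ℕ) : Vertex := by
  classical
  exact if h : {u ∈ treeSet K | u.length = depth K}.Finite ∧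
         {u ∈ treeSet K | u.length = depth K}.Nonempty then
    h.1.toFinset.min' ((Set.Finite.toFinset_nonempty h.1).mpr h.2)
  else []

/-- ψ_i : the i-th vertex on the path from the root to v_base. -/
noncomputable def psiVertex (K : Vertex → ℕ) (i : ℕ) : Vertex := (vbase K).take i

/-- J_i : the i-th outgrowth, i.e. the connected component containing ψ_i of the graph
obtained from T by removing the edges of the path from the root to v_base
(`∅` for `i > D(T)`). -/
noncomputable def outgrowth (K : Vertex → ℕ) (i : ℕ) : Set Vertex :=
  if i ≤ depth K then
    {v ∈ treeSet K | psiVertex K i <+: v ∧ (i = depth K ∨ ¬ psiVertex K (i + 1) <+: v)}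
  else ∅

/-- A weighted tree is B-bare when `|V(J_i)| ≤ B log log ω(T)` for all `0 ≤ i ≤ D(T) - 1`. -/
def Bare (K : Vertex → ℕ) (β : Vertex → ℝ) (B : ℝ) : Prop :=
  ∀ i, i < depth K → ((outgrowth K i).ncard : ℝ) ≤ B * Real.log (Real.log (treeWeight K β))

/-- v_child : the neighbour of the root on the path from the root to v_base. -/
noncomputable def vchild (K : Vertex → ℕ) : Vertex := (vbase K).take 1

/-- The vertex set of the descendent subtree rooted at `w`. -/
def descSet (K : Vertex → ℕ) (w : Vertex) : Set Vertex :=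
  {v ∈ treeSet K | w <+: v}

/-- ω_* : the total weight of the descendent subtree rooted at v_child. -/
noncomputable def omegaStar (K : Vertex → ℕ) (β : Vertex → ℝ) : ℝ :=
  ∑' v : descSet K (vchild K), vWeightFrom β (vchild K) (v : Vertex)

/-- u_k(T) = ω(ψ_{D(T)-k}). -/
noncomputable def uT (K : Vertex → ℕ) (β : Vertex → ℝ) (k : ℕ) : ℝ :=
  vWeight β (psiVertex K (depth K - k))

/-- v_k(T) = Σ_{v ∈ V(E_k)} ω_{ψ_{D(T)-k}}(v). -/
noncomputable def vT (K : Vertex → ℕ) (β : Vertex → ℝ) (k : ℕ) : ℝ :=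
  ∑' v : descSet K (psiVertex K (depth K - k)),
    vWeightFrom β (psiVertex K (depth K - k)) (v : Vertex)

/-- w_k(T) = Σ_{v ∈ V(E_k)} ω(v). -/
noncomputable def wT (K : Vertex → ℕ) (β : Vertex → ℝ) (k : ℕ) : ℝ :=
  ∑' v : descSet K (psiVertex K (depth K - k)), vWeight β (v : Vertex)

/-- The topological support of a measure on ℝ. -/
def measSupport (ν : Measure ℝ) : Set ℝ := {x | ∀ U ∈ nhds x, ν U ≠ 0}

/-- Hypothesis H1 on the offspring distribution. -/
structure OffspringHyp (hOff : ℕ → ℝ) : Prop where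
  nonneg : ∀ k, 0 ≤ hOff k
  total : ∑' k, hOff k = 1
  subcrit : ∑' k : ℕ, (k : ℝ) * hOff k < 1
  tail : ∃ c : ℝ, 0 < c ∧ ∀ k : ℕ, (∑' l : ℕ, if k ≤ l then hOff l else 0) ≤ Real.exp (-c * k)

/-- ν is a probability measure supported in [q,Q]. -/
structure NuSupp (q Q : ℝ) (ν : Measure ℝ) : Prop where
  prob : IsProbabilityMeasure ν
  supp : ν (Set.Icc q Q)ᶜ = 0

/-- Hypothesis H2 : ν is supported in [q,Q], and the ℤ-linear span of the logarithms of
the support of ν is dense in ℝ (non-lattice condition). -/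
structure NuHyp (q Q : ℝ) (ν : Measure ℝ) : Prop where
  prob : IsProbabilityMeasure ν
  supp : ν (Set.Icc q Q)ᶜ = 0
  nonlattice : Dense (↑(AddSubgroup.closure (Real.log '' measSupport ν)) : Set ℝ)

/-- `P` is the law `P_{h,ν}` of the weighted Galton–Watson tree in the Neveu coding:
the offspring counts and the edge biases of all potential vertices are mutually
independent, offspring counts have law `hOff` and biases have law `ν`. -/
def IsGW (hOff : ℕ → ℝ) (ν : Measure ℝ) (P : Measure Conf) : Prop :=
  IsProbabilityMeasure P ∧
  IndepFun Prod.fst Prod.snd P ∧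
  iIndepFun (fun u (ω : Conf) => ω.1 u) P ∧
  iIndepFun (fun u (ω : Conf) => ω.2 u) P ∧
  (∀ u : Vertex, ∀ k : ℕ, P {ω : Conf | ω.1 u = k} = ENNReal.ofReal (hOff k)) ∧
  (∀ u : Vertex, Measure.map (fun ω : Conf => ω.2 u) P = ν)

/-- The sum of the biases towards the children of `v`. -/
noncomputable def childSum (K : Vertex → ℕ) (β : Vertex → ℝ) (v : Vertex) : ℝ :=
  ∑ j ∈ Finset.range (K v), β (v ++ [j])

/-- The one-step transition probabilities of the β-biased random walk. -/
noncomputable def step (K : Vertex → ℕ) (β : Vertex → ℝ) (v w : Vertex) : ℝ := by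
  classical
  exact if v = rootV then
    if ∃ j, j < K v ∧ w = v ++ [j] then β w / childSum K β v else 0
  else
    if w = v.dropLast then 1 / (1 + childSum K β v)
    else if ∃ j, j < K v ∧ w = v ++ [j] then β w / (1 + childSum K β v)
    else 0

/-- `W` is the law of the β-biased random walk on the coded tree started from `start`. -/
def IsWalkLaw (K : Vertex → ℕ) (β : Vertex → ℝ) (start : Vertex)
    (W : Measure (ℕ → Vertex)) : Prop :=
  IsProbabilityMeasure W ∧
  W {x | x 0 = start} = 1 ∧
  ∀ (n : ℕ) (γ : ℕ → Vertex),
    W {x | ∀ i ≤ n + 1, x i = γ i} =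
      W {x | ∀ i ≤ n, x i = γ i} * ENNReal.ofReal (step K β (γ n) (γ (n + 1)))

/-- H_w = inf{n ≥ 1 : X_n = w}. -/
noncomputable def hitTime (x : ℕ → Vertex) (w : Vertex) : ℕ :=
  sInf {n | 1 ≤ n ∧ x n = w}

/-- The deep-excursion event DE = {H_{v_base} < H_φ}. -/
def deepExc (K : Vertex → ℕ) : Set (ℕ → Vertex) :=
  {x | hitTime x (vbase K) < hitTime x rootV}

/-- A configuration on which the walk is well defined: all biases lie in [q,Q] and the
root has at least one child. -/
def ValidConf (q Q : ℝ) (ω : Conf) : Prop :=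
  (∀ u : Vertex, ω.2 u ∈ Set.Icc q Q) ∧ ω.1 rootV ≠ 0

/-- E^φ_{T,β}(H_φ), set to 0 if the tree is the root alone. -/
noncomputable def meanReturn (Wfun : Conf → Vertex → Measure (ℕ → Vertex)) (ω : Conf) : ℝ :=
  if ω.1 rootV = 0 then 0 else ∫ x, (hitTime x rootV : ℝ) ∂(Wfun ω rootV)

/-- E^φ_{T,β,DE}(H_φ) : the mean return time for the walk conditioned to make a
deep excursion. -/
noncomputable def meanReturnDE (Wfun : Conf → Vertex → Measure (ℕ → Vertex)) (ω : Conf) : ℝ :=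
  ∫ x, (hitTime x rootV : ℝ) ∂((Wfun ω rootV)[|deepExc ω.1])

/-- p_de = P^{v_child}_{T,β}(DE). -/
noncomputable def pDE (Wfun : Conf → Vertex → Measure (ℕ → Vertex)) (ω : Conf) : ℝ :=
  ((Wfun ω (vchild ω.1)) (deepExc ω.1)).toReal

/-- `P(f > u) ∼ cst · u^{-χ}` as `u → ∞`. -/
def TailEquiv {α : Type*} [MeasurableSpace α] (P : Measure α) (f : α → ℝ) (cst χ : ℝ) : Prop :=
  Tendsto (fun u : ℝ => (P {a | u < f a}).toReal / (cst * u ^ (-χ))) atTop (nhds 1)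

/-!
Every vertex lies in exactly one outgrowth `J_i`, and a vertex of `J_i` sits less than `|J_i|`
levels below `ψ_i`, so its weight is at most `Q^|J_i| ω(ψ_i) ≤ Q^|J_i| q^-(D-i) ω(v_base)`.
Bareness gives `|J_i| ≤ L = B log log ω(T)`, so summing the geometric series,
`ω(T) ≤ q/(q-1) · L · Q^L · ω(v_base)`, where `Q^L = (log ω(T))^(B log Q)`. For the depth,
`(log ω(T))^(2B log Q) ≤ √ω(T)` once `ω(T)` is large, while `ω(v_base) ≤ Q^D(T)`.
-/

section Coding

variable {K : Vertex → ℕ}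

lemma take_mem_treeSet {u : Vertex} (hu : u ∈ treeSet K) (m : ℕ) : u.take m ∈ treeSet K := by
  intro j hj
  rw [List.length_take] at hj
  have hju : j < u.length := lt_of_lt_of_le hj (min_le_right _ _)
  have hjm : j < m := lt_of_lt_of_le hj (min_le_left _ _)
  rw [List.getD_eq_getElem _ _ (by rw [List.length_take]; omega), List.getElem_take,
    List.take_take, min_eq_left hjm.le, ← List.getD_eq_getElem _ 0 hju]
  exact hu j hju

lemma vWeight_eq_vWeightFrom_nil (β : Vertex → ℝ) (v : Vertex) :
    vWeight β v = vWeightFrom β [] v := by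
  rw [vWeight, vWeightFrom, Finset.range_eq_Ico, List.length_nil]

lemma vWeight_eq_mul_vWeightFrom (β : Vertex → ℝ) {w v : Vertex} (h : w <+: v) :
    vWeight β v = vWeight β w * vWeightFrom β w v := by
  have hw : w = v.take w.length := List.prefix_iff_eq_take.mp h
  have htake : ∀ j ∈ Finset.range w.length, β (w.take (j + 1)) = β (v.take (j + 1)) := by
    intro j hj
    rw [hw, List.take_take, min_eq_left (by simpa using Finset.mem_range.mp hj)]
  rw [vWeight, vWeight, vWeightFrom, Finset.prod_congr rfl htake, Finset.range_eq_Ico,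
    Finset.range_eq_Ico, Finset.prod_Ico_consecutive _ (Nat.zero_le _) h.length_le]

lemma length_le_depth (hK : (treeSet K).Finite) {v : Vertex} (hv : v ∈ treeSet K) :
    v.length ≤ depth K :=
  le_csSup (hK.image _).bddAbove (Set.mem_image_of_mem _ hv)

lemma vbase_mem_deepest (hK : (treeSet K).Finite) :
    vbase K ∈ {u ∈ treeSet K | u.length = depth K} := by
  classical
  have hdeep : {u ∈ treeSet K | u.length = depth K}.Nonempty :=
    Nat.sSup_mem ((treeSet K).image_nonempty.mpr ⟨[], root_mem_treeSet K⟩) (hK.image _).bddAbove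
  have hfin : {u ∈ treeSet K | u.length = depth K}.Finite := hK.subset (Set.sep_subset _ _)
  rw [vbase, dif_pos ⟨hfin, hdeep⟩]
  exact hfin.mem_toFinset.mp (Finset.min'_mem _ _)

lemma vbase_mem_treeSet (hK : (treeSet K).Finite) : vbase K ∈ treeSet K :=
  (vbase_mem_deepest hK).1

lemma length_vbase (hK : (treeSet K).Finite) : (vbase K).length = depth K :=
  (vbase_mem_deepest hK).2

lemma psiVertex_mem_treeSet (hK : (treeSet K).Finite) (i : ℕ) : psiVertex K i ∈ treeSet K :=
  take_mem_treeSet (vbase_mem_treeSet hK) i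

end Coding

section Outgrowth

variable {K : Vertex → ℕ} {i : ℕ} {v : Vertex}

lemma mem_outgrowth_iff :
    v ∈ outgrowth K i ↔ i ≤ depth K ∧ v ∈ treeSet K ∧ psiVertex K i <+: v ∧
      (i = depth K ∨ ¬ psiVertex K (i + 1) <+: v) := by
  unfold outgrowth
  split_ifs with h
  · simp only [Set.mem_ofPred_eq, h, true_and]
  · simp [h]

lemma outgrowth_subset_treeSet (K : Vertex → ℕ) (i : ℕ) : outgrowth K i ⊆ treeSet K :=
  fun _ hv => (mem_outgrowth_iff.mp hv).2.1

lemma psiVertex_prefix_of_le {i k : ℕ} (h : i ≤ k) : psiVertex K i <+: psiVertex K k :=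
  List.take_isPrefix_take.mpr (Or.inl h)

lemma exists_mem_outgrowth (hv : v ∈ treeSet K) : ∃ i ≤ depth K, v ∈ outgrowth K i := by
  classical
  set P := fun j => psiVertex K j <+: v
  set i := Nat.findGreatest P (depth K)
  have hi : i ≤ depth K := Nat.findGreatest_le _
  refine ⟨i, hi, mem_outgrowth_iff.mpr ⟨hi, hv, ?_, ?_⟩⟩
  · exact Nat.findGreatest_spec (P := P) (Nat.zero_le _) (by simp [P, psiVertex])
  · rcases hi.eq_or_lt with h | h
    · exact Or.inl h
    · exact Or.inr (Nat.findGreatest_is_greatest (Nat.lt_succ_self i) h)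

lemma disjoint_outgrowth {i k : ℕ} (hik : i ≠ k) :
    Disjoint (outgrowth K i) (outgrowth K k) := by
  wlog h : i < k generalizing i k
  · exact (this hik.symm (by omega)).symm
  refine Set.disjoint_left.mpr fun v hvi hvk => ?_
  obtain ⟨-, -, -, hi⟩ := mem_outgrowth_iff.mp hvi
  obtain ⟨hk, -, hkv, -⟩ := mem_outgrowth_iff.mp hvk
  rcases hi with hi | hi
  · omega
  · exact hi ((psiVertex_prefix_of_le h).trans hkv)

lemma take_mem_outgrowth (hv : v ∈ outgrowth K i) {m : ℕ} (hm : (psiVertex K i).length ≤ m) :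
    v.take m ∈ outgrowth K i := by
  obtain ⟨hi, hvT, hψv, hlast⟩ := mem_outgrowth_iff.mp hv
  refine mem_outgrowth_iff.mpr ⟨hi, take_mem_treeSet hvT m, ?_, ?_⟩
  · rw [List.prefix_iff_eq_take.mp hψv]
    exact List.take_isPrefix_take.mpr (Or.inl hm)
  · exact hlast.imp_right fun h hpre => h (hpre.trans (List.take_prefix m v))

lemma length_lt_of_mem_outgrowth (hfin : (outgrowth K i).Finite) (hv : v ∈ outgrowth K i) :
    v.length < (psiVertex K i).length + (outgrowth K i).ncard := by
  obtain ⟨-, -, hψv, -⟩ := mem_outgrowth_iff.mp hv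
  have hmaps : Set.MapsTo (v.take ·) (Set.Icc (psiVertex K i).length v.length)
      (outgrowth K i) := fun m hm => take_mem_outgrowth hv hm.1
  have hinj : Set.InjOn (v.take ·) (Set.Icc (psiVertex K i).length v.length) := by
    intro a ha b hb hab
    have := congrArg List.length hab
    simp only [List.length_take] at this
    have := ha.2
    have := hb.2
    omega
  have hcard := Set.ncard_le_ncard_of_injOn _ hmaps hinj hfin
  rw [Set.ncard_eq_toFinset_card' (Set.Icc _ _), Set.toFinset_Icc, Nat.card_Icc] at hcard
  have := hψv.length_le
  omega

lemma outgrowth_depth_subset (hK : (treeSet K).Finite) : outgrowth K (depth K) ⊆ {vbase K} := by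
  intro v hv
  obtain ⟨-, hvT, hψv, -⟩ := mem_outgrowth_iff.mp hv
  have hlen := length_vbase hK
  rw [psiVertex, ← hlen, List.take_length] at hψv
  exact (hψv.eq_of_length_le (hlen ▸ length_le_depth hK hvT)).symm

lemma treeWeight_eq_sum_outgrowth (hK : (treeSet K).Finite) (β : Vertex → ℝ) :
    treeWeight K β =
      ∑ i ∈ Finset.range (depth K + 1), ∑ᶠ v ∈ outgrowth K i, vWeight β v := by
  have hcover : treeSet K = ⋃ i ∈ (Finset.range (depth K + 1) : Set ℕ), outgrowth K i := by
    refine Set.Subset.antisymm (fun v hv => ?_)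
      (Set.iUnion₂_subset fun i _ => outgrowth_subset_treeSet K i)
    obtain ⟨i, hi, hvi⟩ := exists_mem_outgrowth hv
    exact Set.mem_biUnion (by simpa [Nat.lt_succ_iff] using hi) hvi
  have hdisj : (Finset.range (depth K + 1) : Set ℕ).PairwiseDisjoint (outgrowth K) :=
    fun _ _ _ _ hik => disjoint_outgrowth hik
  rw [treeWeight, ← hK.coe_toFinset, Finset.tsum_subtype', ← finsum_mem_coe_finset,
    hK.coe_toFinset, hcover, finsum_mem_biUnion hdisj (Finset.finite_toSet _)
      fun i _ => hK.subset (outgrowth_subset_treeSet K i), finsum_mem_coe_finset]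

end Outgrowth

lemma sum_range_inv_pow_sub_le {q : ℝ} (hq : 1 < q) (n : ℕ) :
    ∑ i ∈ Finset.range (n + 1), q⁻¹ ^ (n - i) ≤ q / (q - 1) := by
  have hreflect := Finset.sum_range_reflect (fun i => q⁻¹ ^ i) (n + 1)
  simp only [Nat.add_sub_cancel] at hreflect
  rw [hreflect, Finset.range_eq_Ico]
  calc ∑ i ∈ Finset.Ico 0 (n + 1), q⁻¹ ^ i ≤ q⁻¹ ^ 0 / (1 - q⁻¹) :=
        geom_sum_Ico_le_of_lt_one (by positivity) (inv_lt_one_of_one_lt₀ hq)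
    _ = q / (q - 1) := by field_simp

def BiasesIn (q Q : ℝ) (K : Vertex → ℕ) (β : Vertex → ℝ) : Prop :=
  ∀ u : Vertex, u ∈ treeSet K → u ≠ rootV → β u ∈ Set.Icc q Q

namespace BiasesIn

variable {q Q : ℝ} {K : Vertex → ℕ} {β : Vertex → ℝ} {v : Vertex}

lemma mem_Icc (hβ : BiasesIn q Q K β) (hv : v ∈ treeSet K) {j : ℕ} (hj : j < v.length) :
    β (v.take (j + 1)) ∈ Set.Icc q Q := by
  refine hβ _ (take_mem_treeSet hv _) fun h => ?_
  have := congrArg List.length h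
  simp only [List.length_take, rootV, List.length_nil] at this
  omega

lemma pow_le_vWeightFrom (hβ : BiasesIn q Q K β) (hq : 0 ≤ q) (w : Vertex)
    (hv : v ∈ treeSet K) : q ^ (v.length - w.length) ≤ vWeightFrom β w v := by
  rw [← Nat.card_Ico, ← Finset.prod_const]
  exact Finset.prod_le_prod (fun _ _ => hq)
    fun j hj => (hβ.mem_Icc hv (Finset.mem_Ico.mp hj).2).1

lemma vWeightFrom_le_pow (hβ : BiasesIn q Q K β) (hq : 0 ≤ q) (w : Vertex)
    (hv : v ∈ treeSet K) : vWeightFrom β w v ≤ Q ^ (v.length - w.length) := by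
  rw [← Nat.card_Ico, ← Finset.prod_const]
  exact Finset.prod_le_prod
    (fun j hj => hq.trans (hβ.mem_Icc hv (Finset.mem_Ico.mp hj).2).1)
    fun j hj => (hβ.mem_Icc hv (Finset.mem_Ico.mp hj).2).2

lemma vWeight_nonneg (hβ : BiasesIn q Q K β) (hq : 0 ≤ q) (hv : v ∈ treeSet K) :
    0 ≤ vWeight β v :=
  Finset.prod_nonneg fun _ hj => hq.trans (hβ.mem_Icc hv (Finset.mem_range.mp hj)).1

lemma vWeight_le_pow (hβ : BiasesIn q Q K β) (hq : 0 ≤ q) (hv : v ∈ treeSet K) :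
    vWeight β v ≤ Q ^ v.length := by
  simpa [vWeight_eq_vWeightFrom_nil] using hβ.vWeightFrom_le_pow hq [] hv

lemma vWeight_psiVertex_le (hK : (treeSet K).Finite) (hβ : BiasesIn q Q K β) (hq : 0 < q)
    (i : ℕ) : vWeight β (psiVertex K i) ≤ vWeight β (vbase K) * q⁻¹ ^ (depth K - i) := by
  have hψ : psiVertex K i <+: vbase K := List.take_prefix _ _
  have hlen : (vbase K).length - (psiVertex K i).length = depth K - i := by
    rw [psiVertex, List.length_take, length_vbase hK]
    omega
  rw [inv_pow, ← div_eq_mul_inv, le_div_iff₀ (pow_pos hq _), ← hlen,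
    vWeight_eq_mul_vWeightFrom β hψ]
  exact mul_le_mul_of_nonneg_left (hβ.pow_le_vWeightFrom hq.le _ (vbase_mem_treeSet hK))
    (hβ.vWeight_nonneg hq.le (psiVertex_mem_treeSet hK i))

lemma vWeight_le_of_mem_outgrowth (hK : (treeSet K).Finite) (hβ : BiasesIn q Q K β)
    (hq : 0 ≤ q) (hQ : 1 ≤ Q) {i : ℕ} (hv : v ∈ outgrowth K i) :
    vWeight β v ≤ vWeight β (psiVertex K i) * Q ^ (outgrowth K i).ncard := by
  obtain ⟨-, hvT, hψv, -⟩ := mem_outgrowth_iff.mp hv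
  have hlen := length_lt_of_mem_outgrowth (hK.subset (outgrowth_subset_treeSet K i)) hv
  rw [vWeight_eq_mul_vWeightFrom β hψv]
  gcongr
  · exact hβ.vWeight_nonneg hq (psiVertex_mem_treeSet hK i)
  · exact (hβ.vWeightFrom_le_pow hq _ hvT).trans (pow_le_pow_right₀ hQ (by omega))

lemma finsum_outgrowth_le (hK : (treeSet K).Finite) (hβ : BiasesIn q Q K β) (hq : 0 ≤ q)
    (hQ : 1 ≤ Q) {i : ℕ} {L : ℝ} (hL : ((outgrowth K i).ncard : ℝ) ≤ L) :
    ∑ᶠ v ∈ outgrowth K i, vWeight β v ≤ L * Q ^ L * vWeight β (psiVertex K i) := by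
  have hJ := hK.subset (outgrowth_subset_treeSet K i)
  have hψ := hβ.vWeight_nonneg hq (psiVertex_mem_treeSet hK i)
  have hL0 : 0 ≤ L := (Nat.cast_nonneg _).trans hL
  have hQL : Q ^ (outgrowth K i).ncard ≤ Q ^ L := by
    rw [← Real.rpow_natCast]
    exact Real.rpow_le_rpow_of_exponent_le hQ hL
  rw [finsum_mem_eq_finite_toFinset_sum _ hJ]
  calc ∑ v ∈ hJ.toFinset, vWeight β v
      ≤ hJ.toFinset.card • (vWeight β (psiVertex K i) * Q ^ (outgrowth K i).ncard) :=
        Finset.sum_le_card_nsmul _ _ _ fun v hv =>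
          hβ.vWeight_le_of_mem_outgrowth hK hq hQ (hJ.mem_toFinset.mp hv)
    _ = (outgrowth K i).ncard * Q ^ (outgrowth K i).ncard * vWeight β (psiVertex K i) := by
        rw [nsmul_eq_mul, Set.ncard_eq_toFinset_card _ hJ]
        ring
    _ ≤ L * Q ^ L * vWeight β (psiVertex K i) := by gcongr

theorem treeWeight_le (hK : (treeSet K).Finite) (hβ : BiasesIn q Q K β) (hq : 1 < q)
    (hQ : 1 ≤ Q) {L : ℝ} (hL : ∀ i ≤ depth K, ((outgrowth K i).ncard : ℝ) ≤ L) :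
    treeWeight K β ≤ q / (q - 1) * L * Q ^ L * vWeight β (vbase K) := by
  have hL0 : 0 ≤ L := (Nat.cast_nonneg _).trans (hL 0 (Nat.zero_le _))
  have hq0 : 0 < q := zero_lt_one.trans hq
  have hb := hβ.vWeight_nonneg hq0.le (vbase_mem_treeSet hK)
  rw [treeWeight_eq_sum_outgrowth hK]
  calc ∑ i ∈ Finset.range (depth K + 1), ∑ᶠ v ∈ outgrowth K i, vWeight β v
      ≤ ∑ i ∈ Finset.range (depth K + 1),
          L * Q ^ L * vWeight β (vbase K) * q⁻¹ ^ (depth K - i) := by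
        refine Finset.sum_le_sum fun i hi => ?_
        rw [mul_assoc]
        refine (hβ.finsum_outgrowth_le hK hq0.le hQ
          (hL i (Nat.lt_succ_iff.mp (Finset.mem_range.mp hi)))).trans ?_
        gcongr
        exact hβ.vWeight_psiVertex_le hK hq0 i
    _ ≤ L * Q ^ L * vWeight β (vbase K) * (q / (q - 1)) := by
        rw [← Finset.mul_sum]
        gcongr
        exact sum_range_inv_pow_sub_le hq _
    _ = q / (q - 1) * L * Q ^ L * vWeight β (vbase K) := by ring

end BiasesIn

lemma Bare.ncard_outgrowth_le {K : Vertex → ℕ} {β : Vertex → ℝ} {B : ℝ}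
    (hK : (treeSet K).Finite) (hbare : Bare K β B)
    (h1 : 1 ≤ B * Real.log (Real.log (treeWeight K β))) (i : ℕ) (hi : i ≤ depth K) :
    ((outgrowth K i).ncard : ℝ) ≤ B * Real.log (Real.log (treeWeight K β)) := by
  rcases hi.lt_or_eq with hi | rfl
  · exact hbare i hi
  · refine le_trans ?_ h1
    exact_mod_cast (Set.ncard_le_ncard (outgrowth_depth_subset hK)).trans
      (Set.ncard_singleton _).le

lemma eventually_mul_log_log_le_log_rpow (c : ℝ) {s : ℝ} (hs : 0 < s) :
    ∀ᶠ t in atTop, c * Real.log (Real.log t) ≤ Real.log t ^ s := by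
  have h := ((isLittleO_log_rpow_atTop hs).const_mul_left c).comp_tendsto tendsto_log_atTop
  filter_upwards [h.bound one_pos, tendsto_log_atTop.eventually_ge_atTop 0] with t ht hlog
  calc c * Real.log (Real.log t) ≤ ‖c * Real.log (Real.log t)‖ := le_norm_self _
    _ ≤ 1 * ‖Real.log t ^ s‖ := ht
    _ = Real.log t ^ s := by rw [one_mul, Real.norm_of_nonneg (Real.rpow_nonneg hlog _)]

lemma rpow_mul_log_comm {b x : ℝ} (hb : 0 < b) (hx : 0 < x) (c : ℝ) :
    b ^ (c * Real.log x) = x ^ (c * Real.log b) := by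
  rw [Real.rpow_def_of_pos hb, Real.rpow_def_of_pos hx]
  ring_nf

lemma eventually_bare_thresholds {q Q B : ℝ} (hQ : 1 < Q) (hB : 0 < B) :
    ∀ᶠ w in atTop, 1 < w ∧ 1 ≤ B * Real.log (Real.log w) ∧
      q / (q - 1) * (B * Real.log (Real.log w)) * Q ^ (B * Real.log (Real.log w))
        ≤ Real.log w ^ (2 * B * Real.log Q) ∧
      Real.log w ^ (2 * B * Real.log Q) ≤ √w := by
  have ha : 0 < B * Real.log Q := mul_pos hB (Real.log_pos hQ)
  have hloglog := tendsto_log_atTop.comp tendsto_log_atTop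
  filter_upwards [eventually_gt_atTop 1,
    (hloglog.const_mul_atTop hB).eventually_ge_atTop 1,
    eventually_mul_log_log_le_log_rpow (q / (q - 1) * B) ha,
    eventually_mul_log_log_le_log_rpow (4 * (B * Real.log Q)) one_pos] with w hw h1 h2 h3
  have hlog : 0 < Real.log w := Real.log_pos hw
  refine ⟨hw, h1, ?_, ?_⟩
  · rw [rpow_mul_log_comm (zero_lt_one.trans hQ) hlog, mul_assoc 2 B, two_mul,
      Real.rpow_add hlog, ← mul_assoc]
    gcongr
  · rw [← Real.log_le_log_iff (Real.rpow_pos_of_pos hlog _) (Real.sqrt_pos.mpr (by linarith)),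
      Real.log_rpow hlog, Real.log_sqrt (by linarith)]
    rw [Real.rpow_one] at h3
    linarith

lemma log_div_le_of_le_sqrt_mul_pow {w Q : ℝ} (hw : 0 < w) (hQ : 1 < Q) {D : ℕ}
    (h : w ≤ √w * Q ^ D) : Real.log w / (2 * Real.log Q) ≤ D := by
  have hsqrt : 0 < √w := Real.sqrt_pos.mpr hw
  have hle : √w ≤ Q ^ D := by
    refine le_of_mul_le_mul_left ?_ hsqrt
    rwa [Real.mul_self_sqrt hw.le]
  have hlog := Real.log_le_log hsqrt hle
  rw [Real.log_sqrt hw.le, Real.log_pow] at hlog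
  rw [div_le_iff₀ (mul_pos two_pos (Real.log_pos hQ))]
  linarith

/-- for `B > 0` there is `C₁ > 0` such that every `B`-bare weighted tree
with `ω(T) ≥ C₁` satisfies `ω(v_base) ≥ ω(T)/(log ω(T))^{2B log Q}` and
`D(T) ≥ log ω(T)/(2 log Q)`. -/
theorem bare_tree_geometry
    (q Q : ℝ) (hq : 1 < q) (hqQ : q ≤ Q) (B : ℝ) (hB : 0 < B) :
    ∃ C₁ : ℝ, 0 < C₁ ∧
      ∀ (K : Vertex → ℕ) (β : Vertex → ℝ),
        (treeSet K).Finite →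
        (∀ u : Vertex, u ∈ treeSet K → u ≠ rootV → β u ∈ Set.Icc q Q) →
        Bare K β B →
        C₁ ≤ treeWeight K β →
        treeWeight K β / Real.log (treeWeight K β) ^ (2 * B * Real.log Q)
            ≤ vWeight β (vbase K) ∧
          Real.log (treeWeight K β) / (2 * Real.log Q) ≤ (depth K : ℝ) := by
  have hQ : 1 < Q := hq.trans_le hqQ
  obtain ⟨C, hC⟩ := eventually_atTop.mp (eventually_bare_thresholds hQ hB)
  refine ⟨max C 1, lt_max_of_lt_right one_pos, fun K β hK hβ hbare hwC => ?_⟩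
  have hβ : BiasesIn q Q K β := hβ
  obtain ⟨hw, hL, hspine, hsqrt⟩ := hC _ ((le_max_left _ _).trans hwC)
  have hb := hβ.vWeight_nonneg (zero_lt_one.trans hq).le (vbase_mem_treeSet hK)
  have hweight : treeWeight K β ≤
      Real.log (treeWeight K β) ^ (2 * B * Real.log Q) * vWeight β (vbase K) :=
    (hβ.treeWeight_le hK hq hQ.le (hbare.ncard_outgrowth_le hK hL)).trans (by gcongr)
  have hdepth : treeWeight K β ≤ √(treeWeight K β) * Q ^ depth K := by
    refine hweight.trans ?_
    rw [← length_vbase hK]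
    gcongr
    exact hβ.vWeight_le_pow (zero_lt_one.trans hq).le (vbase_mem_treeSet hK)
  exact ⟨(div_le_iff₀ (Real.rpow_pos_of_pos (Real.log_pos hw) _)).mpr
    (hweight.trans_eq (mul_comm _ _)), log_div_le_of_le_sqrt_mul_pow (by linarith) hQ hdepth⟩

end GWW
end

section
/- Let U and V be independent real random variables on a probability space (Ω,P) such that: P(U > u) ∼ c u^{−κ} as u → ∞ for some c > 0 and κ > 0; V ≥ 1 almost surely; and there exists η > 0 with P(V > u) ≤ u^{−η} P(U > u) for all sufficiently large u. Then E(V^κ) < ∞ and P(UV > u) ∼ c E(V^κ) u^{−κ} as u → ∞. -/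
open MeasureTheory ProbabilityTheory Filter Set Real
open scoped ENNReal

/-- if `U, V` are independent with `P(U > u) ∼ c u^{-κ}`, `V ≥ 1` a.s. and
`P(V > u) ≤ u^{-η} P(U > u)` for large `u`, then `E(V^κ) < ∞` and
`P(UV > u) ∼ c E(V^κ) u^{-κ}`. -/
theorem product_tail
    {Ω : Type*} [MeasurableSpace Ω] (P : Measure Ω) [IsProbabilityMeasure P]
    (U V : Ω → ℝ) (hU : Measurable U) (hV : Measurable V)
    (hind : IndepFun U V P)
    (c κ : ℝ) (hc : 0 < c) (hκ : 0 < κ)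
    (hUtail : Tendsto (fun u : ℝ => (P {ω | u < U ω}).toReal / (c * u ^ (-κ)))
      atTop (nhds 1))
    (hV1 : ∀ᵐ ω ∂P, 1 ≤ V ω)
    (η : ℝ) (hη : 0 < η)
    (hVtail : ∀ᶠ u : ℝ in atTop,
      (P {ω | u < V ω}).toReal ≤ u ^ (-η) * (P {ω | u < U ω}).toReal) :
    Integrable (fun ω => V ω ^ κ) P ∧
      Tendsto (fun u : ℝ =>
          (P {ω | u < U ω * V ω}).toReal / (c * (∫ ω, V ω ^ κ ∂P) * u ^ (-κ)))
        atTop (nhds 1) := by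
  have hV0 : ∀ᵐ ω ∂P, 0 < V ω := hV1.mono fun ω h => lt_of_lt_of_le one_pos h
  set μU := P.map U with hμUdef
  set μV := P.map V with hμVdef
  have hμUprob : IsProbabilityMeasure μU := Measure.isProbabilityMeasure_map hU.aemeasurable
  have hμVprob : IsProbabilityMeasure μV := Measure.isProbabilityMeasure_map hV.aemeasurable
  have hμV1 : ∀ᵐ v ∂μV, 1 ≤ v :=
    (ae_map_iff hV.aemeasurable (measurableSet_Ici : MeasurableSet (Ici (1:ℝ)))).mpr hV1
  -- tail identities
  have hT_eq : ∀ t : ℝ, P {ω | t < U ω} = μU (Ioi t) := by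
    intro t
    rw [hμUdef, Measure.map_apply hU measurableSet_Ioi]
    rfl
  have hTanti : Antitone (fun t : ℝ => μU (Ioi t)) :=
    fun s t hst => measure_mono (Ioi_subset_Ioi hst)
  have hTmeas : Measurable (fun t : ℝ => μU (Ioi t)) := hTanti.measurable
  -- choose t1 such that tail bounds hold for t ≥ t1
  have hUbd : ∀ᶠ t : ℝ in atTop, (P {ω | t < U ω}).toReal ≤ 2 * (c * t ^ (-κ)) := by
    have h2 : ∀ᶠ t : ℝ in atTop,
        (P {ω | t < U ω}).toReal / (c * t ^ (-κ)) ≤ 2 :=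
      hUtail.eventually (eventually_le_nhds one_lt_two)
    filter_upwards [h2, eventually_gt_atTop (0:ℝ)] with t h2 ht
    have hd : 0 < c * t ^ (-κ) := mul_pos hc (Real.rpow_pos_of_pos ht _)
    calc (P {ω | t < U ω}).toReal
        = (P {ω | t < U ω}).toReal / (c * t ^ (-κ)) * (c * t ^ (-κ)) := by
          field_simp
      _ ≤ 2 * (c * t ^ (-κ)) := by
          exact mul_le_mul_of_nonneg_right h2 hd.le
  obtain ⟨t1, ht1⟩ := (((hVtail.and hUbd).and (eventually_ge_atTop (1:ℝ))).and
    (eventually_ge_atTop (0:ℝ))).exists_forall_of_atTop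
  have ht1a : ∀ t ≥ t1, (P {ω | t < V ω}).toReal ≤ t ^ (-η) * (P {ω | t < U ω}).toReal :=
    fun t ht => ((ht1 t ht).1.1).1
  have ht1b : ∀ t ≥ t1, (P {ω | t < U ω}).toReal ≤ 2 * (c * t ^ (-κ)) :=
    fun t ht => ((ht1 t ht).1.1).2
  have ht11 : 1 ≤ t1 := (ht1 t1 le_rfl).1.2
  have ht1pos : 0 < t1 := lt_of_lt_of_le one_pos ht11
  -- Integrability of V ^ κ
  have hVmeasκ : Measurable (fun ω => V ω ^ κ) := hV.pow measurable_const
  have hVκnn : 0 ≤ᵐ[P] fun ω => V ω ^ κ := by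
    filter_upwards [hV0] with ω hω using (Real.rpow_pos_of_pos hω κ).le
  have hlayer :
      ∫⁻ ω, ENNReal.ofReal (V ω ^ κ) ∂P =
        ENNReal.ofReal κ *
          ∫⁻ t in Ioi 0, P {a | t < V a} * ENNReal.ofReal (t ^ (κ - 1)) := by
    have h0 : 0 ≤ᵐ[P] V := hV0.mono fun ω h => h.le
    exact lintegral_rpow_eq_lintegral_meas_lt_mul P h0 hV.aemeasurable hκ
  have htail_fin :
      (∫⁻ t in Ioi 0, P {a | t < V a} * ENNReal.ofReal (t ^ (κ - 1))) < ∞ := by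
    have hsplit :
        ∫⁻ t in Ioi 0, P {a | t < V a} * ENNReal.ofReal (t ^ (κ - 1)) =
          (∫⁻ t in Ioc 0 t1, P {a | t < V a} * ENNReal.ofReal (t ^ (κ - 1))) +
            ∫⁻ t in Ioi t1, P {a | t < V a} * ENNReal.ofReal (t ^ (κ - 1)) := by
      rw [← lintegral_union measurableSet_Ioi (Ioc_disjoint_Ioi le_rfl),
        Ioc_union_Ioi_eq_Ioi ht1pos.le]
    rw [hsplit]
    have h1 : (∫⁻ t in Ioc 0 t1, P {a | t < V a} * ENNReal.ofReal (t ^ (κ - 1))) < ∞ := by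
      have hb : ∀ t, P {a | t < V a} * ENNReal.ofReal (t ^ (κ - 1)) ≤
          ENNReal.ofReal (t ^ (κ - 1)) := by
        intro t
        calc P {a | t < V a} * ENNReal.ofReal (t ^ (κ - 1))
            ≤ 1 * ENNReal.ofReal (t ^ (κ - 1)) :=
              mul_le_mul_left prob_le_one _
          _ = ENNReal.ofReal (t ^ (κ - 1)) := one_mul _
      refine lt_of_le_of_lt (lintegral_mono hb) ?_
      have hint : IntegrableOn (fun t : ℝ => t ^ (κ - 1)) (Ioc 0 t1) := by
        rw [integrableOn_Ioc_iff_integrableOn_Ioo]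
        exact (intervalIntegral.integrableOn_Ioo_rpow_iff ht1pos).mpr (by linarith)
      exact hint.lintegral_lt_top
    have h2 : (∫⁻ t in Ioi t1, P {a | t < V a} * ENNReal.ofReal (t ^ (κ - 1))) < ∞ := by
      have hb : ∀ t ∈ Ioi t1, P {a | t < V a} * ENNReal.ofReal (t ^ (κ - 1)) ≤
          ENNReal.ofReal (2 * c * t ^ (-η - 1)) := by
        intro t ht
        have htpos : (0:ℝ) < t := lt_trans ht1pos ht
        have hVle : (P {a | t < V a}).toReal ≤ 2 * c * (t ^ (-η) * t ^ (-κ)) := by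
          calc (P {a | t < V a}).toReal
              ≤ t ^ (-η) * (P {ω | t < U ω}).toReal := ht1a t (le_of_lt ht)
            _ ≤ t ^ (-η) * (2 * (c * t ^ (-κ))) := by
                exact mul_le_mul_of_nonneg_left (ht1b t (le_of_lt ht))
                  (Real.rpow_nonneg htpos.le _)
            _ = 2 * c * (t ^ (-η) * t ^ (-κ)) := by ring
        have hVle' : P {a | t < V a} ≤ ENNReal.ofReal (2 * c * (t ^ (-η) * t ^ (-κ))) := by
          rw [← ENNReal.ofReal_toReal (measure_ne_top P _)]
          exact ENNReal.ofReal_le_ofReal hVle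
        calc P {a | t < V a} * ENNReal.ofReal (t ^ (κ - 1))
            ≤ ENNReal.ofReal (2 * c * (t ^ (-η) * t ^ (-κ))) *
                ENNReal.ofReal (t ^ (κ - 1)) := mul_le_mul_left hVle' _
          _ = ENNReal.ofReal (2 * c * (t ^ (-η) * t ^ (-κ)) * t ^ (κ - 1)) := by
              rw [← ENNReal.ofReal_mul]
              positivity
          _ = ENNReal.ofReal (2 * c * t ^ (-η - 1)) := by
              congr 1
              rw [show (-η - 1 : ℝ) = -η + (-κ + (κ - 1)) by ring,
                Real.rpow_add htpos, Real.rpow_add htpos]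
              ring
      refine lt_of_le_of_lt (setLIntegral_mono' measurableSet_Ioi hb) ?_
      have hint : IntegrableOn (fun t : ℝ => 2 * c * t ^ (-η - 1)) (Ioi t1) := by
        exact ((integrableOn_Ioi_rpow_iff ht1pos).mpr (by linarith)).const_mul (2 * c)
      exact hint.lintegral_lt_top
    exact ENNReal.add_lt_top.mpr ⟨h1, h2⟩
  have hIntVκ : Integrable (fun ω => V ω ^ κ) P := by
    refine ⟨hVmeasκ.aestronglyMeasurable, ?_⟩
    rw [hasFiniteIntegral_iff_ofReal hVκnn, hlayer]
    exact ENNReal.mul_lt_top ENNReal.ofReal_lt_top htail_fin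
  refine ⟨hIntVκ, ?_⟩
  -- pushforward facts
  have hvκ_aesm : AEStronglyMeasurable (fun v : ℝ => v ^ κ) μV :=
    (measurable_id.pow measurable_const : Measurable fun v : ℝ => v ^ κ).aestronglyMeasurable
  have hI_eq : ∫ ω, V ω ^ κ ∂P = ∫ v, v ^ κ ∂μV :=
    (integral_map hV.aemeasurable hvκ_aesm).symm
  set I : ℝ := ∫ v, v ^ κ ∂μV with hIdef
  have hInt_vκ : Integrable (fun v : ℝ => v ^ κ) μV :=
    (integrable_map_measure hvκ_aesm hV.aemeasurable).mpr hIntVκ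
  have hI1 : 1 ≤ I := by
    have h1 : ∫ v, (1:ℝ) ∂μV ≤ I := by
      refine integral_mono_ae (integrable_const 1) hInt_vκ ?_
      filter_upwards [hμV1] with v hv
      exact Real.one_le_rpow hv hκ.le
    simpa using h1
  have hIpos : 0 < I := lt_of_lt_of_le one_pos hI1
  -- key identity : P(UV > u) as an integral over μV
  have hident : ∀ u : ℝ, P {ω | u < U ω * V ω} = ∫⁻ v, μU (Ioi (u / v)) ∂μV := by
    intro u
    have hmap : P.map (fun ω => (U ω, V ω)) = μU.prod μV :=
      (indepFun_iff_map_prod_eq_prod_map_map hU.aemeasurable hV.aemeasurable).mp hind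
    have hset : MeasurableSet {p : ℝ × ℝ | u < p.1 * p.2} :=
      measurableSet_lt measurable_const (measurable_fst.mul measurable_snd)
    calc P {ω | u < U ω * V ω}
        = P.map (fun ω => (U ω, V ω)) {p : ℝ × ℝ | u < p.1 * p.2} := by
          rw [Measure.map_apply (hU.prodMk hV) hset]
          rfl
      _ = (μU.prod μV) {p : ℝ × ℝ | u < p.1 * p.2} := by rw [hmap]
      _ = ∫⁻ v, μU ((fun x => (x, v)) ⁻¹' {p : ℝ × ℝ | u < p.1 * p.2}) ∂μV :=
          Measure.prod_apply_symm hset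
      _ = ∫⁻ v, μU (Ioi (u / v)) ∂μV := by
          refine lintegral_congr_ae ?_
          filter_upwards [hμV1] with v hv
          have hv0 : (0:ℝ) < v := lt_of_lt_of_le one_pos hv
          congr 1
          ext x
          simp only [mem_preimage, mem_setOf_eq, mem_Ioi]
          exact (div_lt_iff₀ hv0).symm
  -- the family of functions and dominated convergence
  set Φ : ℝ → ℝ → ℝ := fun u v => (μU (Ioi (u / v))).toReal / (c * u ^ (-κ)) with hΦdef
  have hTRmeas : Measurable (fun t : ℝ => (μU (Ioi t)).toReal) := by
    refine Antitone.measurable ?_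
    intro s t hst
    exact ENNReal.toReal_mono (measure_ne_top μU _) (hTanti hst)
  have hΦmeas : ∀ u : ℝ, AEStronglyMeasurable (Φ u) μV := by
    intro u
    exact ((hTRmeas.comp (measurable_const.div measurable_id)).div_const
      (c * u ^ (-κ))).aestronglyMeasurable
  set C : ℝ := 2 + t1 ^ κ / c with hCdef
  have hbound : ∀ᶠ u : ℝ in atTop, ∀ᵐ v ∂μV, ‖Φ u v‖ ≤ C * v ^ κ := by
    filter_upwards [eventually_ge_atTop t1] with u hu
    have hupos : (0:ℝ) < u := lt_of_lt_of_le ht1pos hu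
    filter_upwards [hμV1] with v hv
    have hv0 : (0:ℝ) < v := lt_of_lt_of_le one_pos hv
    have huv : (0:ℝ) < u / v := div_pos hupos hv0
    have hvκpos : (0:ℝ) < v ^ κ := Real.rpow_pos_of_pos hv0 _
    have huκpos : (0:ℝ) < u ^ (-κ) := Real.rpow_pos_of_pos hupos _
    have hΦnn : 0 ≤ Φ u v :=
      div_nonneg ENNReal.toReal_nonneg (mul_pos hc huκpos).le
    rw [Real.norm_of_nonneg hΦnn]
    have hnum : (μU (Ioi (u / v))).toReal = (P {ω | u / v < U ω}).toReal := by
      rw [hT_eq]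
    rcases le_or_gt t1 (u / v) with hcase | hcase
    · -- u / v ≥ t1 : use the tail bound on U
      have h1 : (μU (Ioi (u / v))).toReal ≤ 2 * (c * (u / v) ^ (-κ)) := by
        rw [hnum]; exact ht1b _ hcase
      have h2 : (u / v) ^ (-κ) = u ^ (-κ) * v ^ κ := by
        rw [Real.div_rpow hupos.le hv0.le, Real.rpow_neg hv0.le,
          div_inv_eq_mul]
      have : Φ u v ≤ 2 * (c * (u ^ (-κ) * v ^ κ)) / (c * u ^ (-κ)) := by
        rw [hΦdef]
        exact div_le_div_of_nonneg_right (by rw [← h2]; exact h1) (mul_pos hc huκpos).le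
      calc Φ u v ≤ 2 * (c * (u ^ (-κ) * v ^ κ)) / (c * u ^ (-κ)) := this
        _ = 2 * v ^ κ := by field_simp
        _ ≤ C * v ^ κ := by
            rw [hCdef]
            have h0 : (0:ℝ) ≤ t1 ^ κ / c :=
              div_nonneg (Real.rpow_nonneg ht1pos.le _) hc.le
            nlinarith [mul_nonneg h0 hvκpos.le]
    · -- u / v < t1 : crude bound by 1
      have h1 : (μU (Ioi (u / v))).toReal ≤ 1 := by
        rw [hnum]
        exact ENNReal.toReal_le_of_le_ofReal one_pos.le (by simpa using prob_le_one)
      have h2 : Φ u v ≤ 1 / (c * u ^ (-κ)) :=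
        div_le_div_of_nonneg_right h1 (mul_pos hc huκpos).le
      have h3 : 1 / (c * u ^ (-κ)) = u ^ κ / c := by
        rw [Real.rpow_neg hupos.le]
        field_simp
      have h4 : u ^ κ ≤ t1 ^ κ * v ^ κ := by
        rw [← Real.mul_rpow ht1pos.le hv0.le]
        exact Real.rpow_le_rpow hupos.le ((div_lt_iff₀ hv0).mp hcase).le hκ.le
      calc Φ u v ≤ u ^ κ / c := by rw [← h3]; exact h2
        _ ≤ t1 ^ κ * v ^ κ / c := by
            exact div_le_div_of_nonneg_right h4 hc.le
        _ ≤ C * v ^ κ := by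
            rw [hCdef]
            have heq : t1 ^ κ * v ^ κ / c = t1 ^ κ / c * v ^ κ := by ring
            rw [heq]
            nlinarith [hvκpos.le]
  have hGint : Integrable (fun v : ℝ => C * v ^ κ) μV := hInt_vκ.const_mul C
  have hlim : ∀ᵐ v ∂μV, Tendsto (fun u : ℝ => Φ u v) atTop (nhds (v ^ κ)) := by
    filter_upwards [hμV1] with v hv
    have hv0 : (0:ℝ) < v := lt_of_lt_of_le one_pos hv
    have h1 : Tendsto (fun u : ℝ => u / v) atTop atTop :=
      tendsto_id.atTop_div_const hv0
    have h2 : Tendsto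
        (fun u : ℝ => (P {ω | u / v < U ω}).toReal / (c * (u / v) ^ (-κ)) * v ^ κ)
        atTop (nhds (v ^ κ)) := by
      have := (hUtail.comp h1).mul_const (v ^ κ)
      simpa using this
    refine Tendsto.congr' ?_ h2
    filter_upwards [eventually_gt_atTop (0:ℝ)] with u hu
    have huκpos : (0:ℝ) < u ^ (-κ) := Real.rpow_pos_of_pos hu _
    have hvκpos : (0:ℝ) < v ^ κ := Real.rpow_pos_of_pos hv0 _
    have hdr : (u / v) ^ (-κ) = u ^ (-κ) * v ^ κ := by
      rw [Real.div_rpow hu.le hv0.le, Real.rpow_neg hv0.le, div_inv_eq_mul]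
    rw [hΦdef]
    simp only
    rw [hT_eq, hdr]
    field_simp
  have hmain : Tendsto (fun u : ℝ => ∫ v, Φ u v ∂μV) atTop (nhds I) :=
    tendsto_integral_filter_of_dominated_convergence (fun v => C * v ^ κ)
      (Eventually.of_forall hΦmeas) hbound hGint hlim
  have hmain2 : Tendsto (fun u : ℝ => (∫ v, Φ u v ∂μV) / I) atTop (nhds 1) := by
    have := hmain.div_const I
    rwa [div_self hIpos.ne'] at this
  refine Tendsto.congr' ?_ hmain2
  filter_upwards [eventually_gt_atTop (0:ℝ)] with u hu
  have huκpos : (0:ℝ) < u ^ (-κ) := Real.rpow_pos_of_pos hu _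
  have hInteq : ∫ v, Φ u v ∂μV =
      (P {ω | u < U ω * V ω}).toReal / (c * u ^ (-κ)) := by
    rw [hΦdef]
    simp only
    rw [integral_div]
    congr 1
    have haem : AEMeasurable (fun v : ℝ => μU (Ioi (u / v))) μV :=
      (hTmeas.comp (measurable_const.div measurable_id)).aemeasurable
    have hfin : ∀ᵐ v ∂μV, μU (Ioi (u / v)) < ∞ :=
      Eventually.of_forall fun v => measure_lt_top _ _
    rw [integral_toReal haem hfin, ← hident u]
  rw [hInteq, hI_eq]
  rw [div_div]
  congr 1
  ring
end

section
/- Let (X_i)_{i≥0} and (R_i)_{i≥0} be ℕ-valued random variables on a probability space (Ω,P) with X_i ≤ R_i almost surely for each i, and suppose there exists c > 0 such that for every n, k ∈ ℕ: (a) P( X_n ≥ k | σ(X_0,…,X_{n−1}) ) ≤ e^{−ck} almost surely; (b) P( X_n ∈ {0,1} | σ(X_0,…,X_{n−1}) ) ≥ c almost surely; and (c) P( R_n ≥ k | σ(R_0,…,R_{n−1}) ) ≤ e^{−ck} almost surely. Define D_n = {n+1, …, n+X_n−1} if X_n ≥ 2 and D_n = ∅ otherwise, D = ⋃_{n≥0}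 D_n, Y = inf{ i ≥ 1 : i ∉ D }, and Z = Σ_{i=0}^{Y−1} R_i. Then there exists ĉ > 0, determined by c alone, such that P( Z ≥ k ) ≤ e^{−ĉ k} for every k ∈ ℕ. -/
/-!
Let `U m` be the overshoot of the covered stretch beyond `m`: `U 0 = 1` and, while `U m ≠ 0`,
`U (m + 1) = max (U m) (X m) - 1`. If `U m = 0` then `Y ≤ m`, so `Z ≥ k` forces `U m ≠ 0` or
`R 0 + ⋯ + R (m - 1) ≥ k`.

The first event has probability at most `ρ ^ m` for some `ρ < 1` depending only on `c`: for the
potential `g w = ∑ i < w, (a ^ i + ε * b ^ i)`, with `a < 1 < b` and `ε` tiny, the conditional tail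
bound on `X` gives `E[g (U (m + 1))] ≤ ρ * E[g (U m)]`. The second event has probability at most
`M ^ m * exp (-c k / 2)`, since the conditional tail bound on `R` gives
`E[exp (c / 2 * (R 0 + ⋯ + R m))] ≤ M * E[exp (c / 2 * (R 0 + ⋯ + R (m - 1)))]`. Taking `m` a small
multiple of `k` gives `P(Z ≥ k) ≤ C * exp (-α k)`; for the finitely many `k ≥ 1` where this is
useless, `Z ≥ k` forces `R 0 ≥ 1` (because `X 0 ≤ R 0`), an event of probability at most
`exp (-c)`.
-/

open MeasureTheory ProbabilityTheory Filter Set Real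
open scoped ENNReal

namespace GeometricSumTail

section Covering

-- `overshoot x m = max 1 (max_{n < m} (n + x n)) - m` as long as each of `1, …, m` lies in some
-- `(n, n + x n)`, and `0` once one of them does not.
def overshoot (x : ℕ → ℕ) : ℕ → ℕ
  | 0 => 1
  | m + 1 => if overshoot x m = 0 then 0 else max (overshoot x m - 1) (x m - 1)

noncomputable def firstUncovered (x : ℕ → ℕ) : ℕ :=
  sInf {i | 1 ≤ i ∧ ∀ n, ¬(n < i ∧ i < n + x n)}

variable {x : ℕ → ℕ}

lemma add_le_add_overshoot {m : ℕ} (h : overshoot x m ≠ 0) {n : ℕ} (hn : n < m) :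
    n + x n ≤ m + overshoot x m := by
  induction m with
  | zero => omega
  | succ m ih =>
    have hm : overshoot x m ≠ 0 := fun h0 => h (by simp [overshoot, h0])
    have hstep : overshoot x (m + 1) = max (overshoot x m - 1) (x m - 1) := if_neg hm
    rw [hstep] at h ⊢
    rcases Nat.lt_succ_iff_lt_or_eq.1 hn with hn | rfl
    · have := ih hm hn
      omega
    · omega

lemma exists_uncovered_of_overshoot_eq_zero {m : ℕ} (h : overshoot x m = 0) :
    ∃ i, 1 ≤ i ∧ i ≤ m ∧ ∀ n, ¬(n < i ∧ i < n + x n) := by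
  induction m with
  | zero => simp [overshoot] at h
  | succ m ih =>
    by_cases hm : overshoot x m = 0
    · obtain ⟨i, hi1, him, hi⟩ := ih hm
      exact ⟨i, hi1, by omega, hi⟩
    · have hstep : overshoot x (m + 1) = max (overshoot x m - 1) (x m - 1) := if_neg hm
      refine ⟨m + 1, by omega, le_rfl, fun n ⟨hn, hcov⟩ => ?_⟩
      rcases Nat.lt_succ_iff_lt_or_eq.1 hn with hn | rfl
      · have := add_le_add_overshoot hm hn
        omega
      · omega

lemma firstUncovered_le {i : ℕ} (hi1 : 1 ≤ i) (hi : ∀ n, ¬(n < i ∧ i < n + x n)) :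
    firstUncovered x ≤ i :=
  Nat.sInf_le (s := {i | 1 ≤ i ∧ ∀ n, ¬(n < i ∧ i < n + x n)}) ⟨hi1, hi⟩

lemma firstUncovered_le_of_overshoot_eq_zero {m : ℕ} (h : overshoot x m = 0) :
    firstUncovered x ≤ m := by
  obtain ⟨i, hi1, him, hi⟩ := exists_uncovered_of_overshoot_eq_zero h
  exact (firstUncovered_le hi1 hi).trans him

lemma firstUncovered_le_one (h : x 0 ≤ 1) : firstUncovered x ≤ 1 := by
  refine firstUncovered_le le_rfl fun n ⟨hn, hcov⟩ => ?_
  obtain rfl : n = 0 := by omega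
  omega

end Covering

lemma sum_range_max {M : Type*} [AddCommMonoid M] [TopologicalSpace M] (f : ℕ → M) (a b : ℕ) :
    ∑ i ∈ Finset.range (max a b), f i
      = ∑ i ∈ Finset.range a, f i + ∑' i, if a ≤ i ∧ i < b then f i else 0 := by
  rcases le_total a b with hab | hba
  · rw [max_eq_right hab, ← Finset.sum_range_add_sum_Ico f hab,
      tsum_eq_sum (s := Finset.Ico a b) fun i hi => if_neg (by simpa using hi)]
    exact congrArg _ (Finset.sum_congr rfl fun i hi => (if_pos (by simpa using hi)).symm)
  · rw [max_eq_left hba, tsum_congr fun i => if_neg (by omega), tsum_zero, add_zero]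

lemma sum_range_overshoot_succ_le (x : ℕ → ℕ) (m : ℕ) (δ : ℕ → ℝ≥0∞) :
    ∑ i ∈ Finset.range (overshoot x (m + 1)), δ i
      ≤ (if overshoot x m = 0 then 0 else ∑ i ∈ Finset.range (overshoot x m - 1), δ i)
        + ∑' i, if i + 2 ≤ x m ∧ overshoot x m ≠ 0 ∧ overshoot x m - 1 ≤ i then δ i else 0 := by
  by_cases h : overshoot x m = 0
  · simp [overshoot, h]
  · rw [overshoot, if_neg h, if_neg h, sum_range_max]
    gcongr with i
    split_ifs <;> first | rfl | omega

lemma pow_eq_one_add_sum_range {b : ℝ≥0∞} (hb : 1 ≤ b) (n : ℕ) :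
    b ^ n = 1 + ∑ i ∈ Finset.range n, (b - 1) * b ^ i := by
  induction n with
  | zero => simp
  | succ n ih =>
    rw [Finset.sum_range_succ, ← add_assoc, ← ih, pow_succ, ← one_add_mul, mul_comm,
      add_comm 1, tsub_add_cancel_of_le hb]

lemma hasSum_ite_le_pow {r : ℝ} (hr0 : 0 ≤ r) (hr1 : r < 1) (w : ℕ) :
    HasSum (fun i => if w ≤ i then r ^ i else 0) (r ^ w / (1 - r)) := by
  refine (hasSum_nat_add_iff' w).1 ?_
  simp only [le_add_iff_nonneg_left, zero_le, if_true]
  rw [Finset.sum_eq_zero fun i hi => if_neg (by simpa using hi), sub_zero]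
  simp only [pow_add, div_eq_mul_inv, mul_comm _ (r ^ w)]
  exact (hasSum_geometric_of_lt_one hr0 hr1).mul_left _

lemma add_le_mul_add_of_le {g T d K l : ℝ} (hT : T ≤ l * d) (hg : g ≤ K * d) (hl : l ≤ 1)
    (hK : 0 ≤ K) : g + T ≤ (K + l) / (K + 1) * (g + d) := by
  rw [div_mul_eq_mul_div, le_div_iff₀ (by linarith)]
  nlinarith [mul_le_mul_of_nonneg_left hT (by linarith : (0:ℝ) ≤ K + 1),
    mul_nonneg (sub_nonneg.2 hl) (sub_nonneg.2 hg)]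

lemma geom_tail_sum_le {q a b θ ε : ℝ} {h : ℕ} (hq0 : 0 ≤ q) (hq1 : q ≤ 1) (ha0 : 0 ≤ a)
    (ha1 : a ≤ 1) (hb1 : 1 ≤ b) (haq : a * q < 1) (hbq : b * q < 1) (hθ : 0 ≤ θ) (hε : 0 ≤ ε)
    (hh : q ^ h ≤ θ * (1 - b * q)) (hεh : ε * b ^ h ≤ θ * a ^ h * (1 - b * q)) (w : ℕ) :
    q ^ 2 * ((a * q) ^ w / (1 - a * q)) + ε * q ^ 2 * ((b * q) ^ w / (1 - b * q))
      ≤ (q ^ 2 / (1 - a * q) + θ) * (a ^ w + ε * b ^ w) := by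
  have haq1 : 0 < 1 - a * q := by linarith
  have hbq1 : 0 < 1 - b * q := by linarith
  have hqw : q ^ w ≤ 1 := pow_le_one₀ hq0 hq1
  have hA : q ^ 2 * ((a * q) ^ w / (1 - a * q)) ≤ q ^ 2 / (1 - a * q) * a ^ w :=
    calc q ^ 2 * ((a * q) ^ w / (1 - a * q)) = q ^ 2 / (1 - a * q) * a ^ w * q ^ w := by ring
      _ ≤ q ^ 2 / (1 - a * q) * a ^ w := mul_le_of_le_one_right (by positivity) hqw
  have hB : ε * q ^ 2 * ((b * q) ^ w / (1 - b * q)) ≤ θ * (a ^ w + ε * b ^ w) := by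
    rw [show ε * q ^ 2 * ((b * q) ^ w / (1 - b * q))
      = ε * b ^ w * q ^ (w + 2) / (1 - b * q) by ring, div_le_iff₀ hbq1]
    rcases le_or_gt h w with hw | hw
    · have : q ^ (w + 2) ≤ θ * (1 - b * q) := (pow_le_pow_of_le_one hq0 hq1 (by omega)).trans hh
      nlinarith [mul_le_mul_of_nonneg_left this (by positivity : 0 ≤ ε * b ^ w),
        (by positivity : 0 ≤ θ * a ^ w * (1 - b * q))]
    · have h1 : b ^ w * q ^ (w + 2) ≤ b ^ h :=
        (mul_le_of_le_one_right (by positivity) (pow_le_one₀ hq0 hq1)).trans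
          (pow_le_pow_right₀ hb1 hw.le)
      have h2 : a ^ h ≤ a ^ w := pow_le_pow_of_le_one ha0 ha1 hw.le
      nlinarith [mul_le_mul_of_nonneg_left h1 hε, mul_le_mul_of_nonneg_left h2
        (by positivity : 0 ≤ θ * (1 - b * q)), (by positivity : 0 ≤ θ * (ε * b ^ w) * (1 - b * q))]
  nlinarith [(by positivity : 0 ≤ q ^ 2 / (1 - a * q) * (ε * b ^ w))]

lemma sum_range_geom_add_le {a b ε : ℝ} (ha0 : 0 ≤ a) (ha1 : a < 1) (hb1 : 1 < b) (hε : 0 < ε)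
    (w : ℕ) :
    ∑ i ∈ Finset.range w, (a ^ i + ε * b ^ i)
      ≤ (1 / ((1 - a) * ε) + 1 / (b - 1)) * (a ^ w + ε * b ^ w) := by
  have hb0 : 0 < b - 1 := by linarith
  have hA : ∑ i ∈ Finset.range w, a ^ i ≤ 1 / (1 - a) := by
    simpa using geom_sum_Ico_le_of_lt_one (m := 0) (n := w) ha0 ha1
  have hB : ∑ i ∈ Finset.range w, b ^ i ≤ b ^ w / (b - 1) := by
    rw [geom_sum_eq hb1.ne' w]
    exact div_le_div_of_nonneg_right (by linarith) hb0.le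
  have hbw : 1 ≤ b ^ w := one_le_pow₀ hb1.le
  have h1 : 1 / ((1 - a) * ε) * (ε * b ^ w) = b ^ w / (1 - a) := by
    field_simp
  have h2 : 1 / (1 - a) ≤ b ^ w / (1 - a) := div_le_div_of_nonneg_right hbw (by linarith)
  have h3 : ε * (b ^ w / (b - 1)) = 1 / (b - 1) * (ε * b ^ w) := by ring
  rw [Finset.sum_add_distrib, ← Finset.mul_sum, add_mul, mul_add, mul_add, h1, ← h3]
  have h4 : 0 ≤ 1 / ((1 - a) * ε) * a ^ w := by
    have : 0 < 1 - a := by linarith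
    positivity
  have h5 : 0 ≤ 1 / (b - 1) * a ^ w := by positivity
  nlinarith [mul_le_mul_of_nonneg_left hB hε.le]

lemma hasSum_tail_geom_add {q a b ε : ℝ} (haq0 : 0 ≤ a * q) (haq : a * q < 1) (hbq0 : 0 ≤ b * q)
    (hbq : b * q < 1) (w : ℕ) :
    HasSum (fun i => if w ≤ i then q ^ (i + 2) * (a ^ i + ε * b ^ i) else 0)
      (q ^ 2 * ((a * q) ^ w / (1 - a * q)) + ε * q ^ 2 * ((b * q) ^ w / (1 - b * q))) := by
  refine (((hasSum_ite_le_pow haq0 haq w).mul_left (q ^ 2)).add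
    ((hasSum_ite_le_pow hbq0 hbq w).mul_left (ε * q ^ 2))).congr_fun fun i => ?_
  split_ifs <;> ring

-- `δ i = a ^ i + ε * b ^ i`: the tail sum of the `a`-part is at most `q ^ 2 / (1 - a * q) < 1`
-- times `a ^ w`; that of the `b`-part is at most `θ * ε * b ^ w` for `w ≥ h`, and `ε` is chosen
-- so that it is at most `θ * a ^ w` for `w < h`. The growing `b`-part keeps
-- `∑ i < w, δ i ≤ K * δ w`.
lemma exists_drift_potential_real {q : ℝ} (hq0 : 0 < q) (hq1 : q < 1) :
    ∃ (δ : ℕ → ℝ) (ρ : ℝ), (∀ i, 0 < δ i) ∧ 0 < ρ ∧ ρ < 1 ∧ ∀ w, ∃ T,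
      HasSum (fun i => if w ≤ i then q ^ (i + 2) * δ i else 0) T ∧
      ∑ i ∈ Finset.range w, δ i + T ≤ ρ * ∑ i ∈ Finset.range (w + 1), δ i := by
  set a := 1 - q
  set b := (1 + q) / (2 * q)
  have ha0 : 0 < a := by simp only [a]; linarith
  have hbq : b * q = (1 + q) / 2 := by simp only [b]; field_simp
  have hb1 : 1 < b := by rw [lt_div_iff₀ (by positivity)]; linarith
  have hbq1 : b * q < 1 := by rw [hbq]; linarith
  have haq1 : a * q < 1 := by simp only [a]; nlinarith
  set la := q ^ 2 / (1 - a * q)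
  have hla : la < 1 := by rw [div_lt_one (by linarith)]; simp only [a]; nlinarith
  set θ := (1 - la) / 2
  have hθ : 0 < θ := by simp only [θ]; linarith
  obtain ⟨h, hh⟩ := exists_pow_lt_of_lt_one (mul_pos hθ (sub_pos.2 hbq1)) hq1
  set ε := θ * a ^ h * (1 - b * q) / b ^ h
  have hε : 0 < ε := by have := sub_pos.2 hbq1; positivity
  have hεh : ε * b ^ h = θ * a ^ h * (1 - b * q) := div_mul_cancel₀ _ (by positivity)
  set K := 1 / ((1 - a) * ε) + 1 / (b - 1)
  have hK : 0 ≤ K := by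
    have : 0 < 1 - a := by simp only [a]; linarith
    have : 0 < b - 1 := by linarith
    positivity
  refine ⟨fun i => a ^ i + ε * b ^ i, (K + (la + θ)) / (K + 1), fun i => by positivity,
    by positivity, by rw [div_lt_one (by positivity)]; simp only [θ]; linarith, fun w => ⟨_,
      hasSum_tail_geom_add (by positivity) haq1 (by positivity) hbq1 w, ?_⟩⟩
  rw [Finset.sum_range_succ]
  exact add_le_mul_add_of_le (geom_tail_sum_le hq0.le hq1.le ha0.le (by simp only [a]; linarith)
    hb1.le haq1 hbq1 hθ.le hε.le hh.le hεh.le w) (sum_range_geom_add_le ha0.le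
      (by simp only [a]; linarith) hb1 hε w) (by simp only [θ]; linarith) hK

lemma exists_exp_bound_of_le_one_of_le {C α β : ℝ} (hα : 0 < α) (hβ : 0 < β) :
    ∃ γ, 0 < γ ∧ ∀ (k : ℕ) (u : ℝ≥0∞), u ≤ 1 → (1 ≤ k → u ≤ ENNReal.ofReal (exp (-β))) →
      u ≤ ENNReal.ofReal (C * exp (-α * k)) → u ≤ ENNReal.ofReal (exp (-γ * k)) := by
  obtain ⟨K, hK⟩ := exists_nat_ge (2 * log C / α)
  set K' := max K 1
  have hK' : (1 : ℝ) ≤ K' := by exact_mod_cast le_max_right K 1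
  refine ⟨min (α / 2) (β / K'), lt_min (by positivity) (by positivity), fun k u hu1 hβk hαk => ?_⟩
  rcases Nat.eq_zero_or_pos k with rfl | hk
  · simpa using hu1
  rcases le_or_gt k K' with hkK | hkK
  · refine (hβk hk).trans (ENNReal.ofReal_le_ofReal (exp_le_exp.2 ?_))
    have : min (α / 2) (β / K') * k ≤ β / K' * K' :=
      mul_le_mul (min_le_right _ _) (by exact_mod_cast hkK) (by positivity) (by positivity)
    rw [div_mul_cancel₀ _ (by positivity)] at this
    linarith
  · refine hαk.trans (ENNReal.ofReal_le_ofReal ?_)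
    have hC : C ≤ exp (α / 2 * k) := by
      refine (le_exp_log C).trans (exp_le_exp.2 ?_)
      have : (K : ℝ) ≤ k := by exact_mod_cast (le_max_left K 1).trans hkK.le
      rw [div_le_iff₀ hα] at hK
      nlinarith [mul_le_mul_of_nonneg_right this hα.le]
    calc C * exp (-α * k) ≤ exp (α / 2 * k) * exp (-α * k) := by gcongr
      _ = exp (-(α / 2) * k) := by rw [← exp_add]; ring_nf
      _ ≤ exp (-min (α / 2) (β / K') * k) := by gcongr; exact min_le_left _ _

lemma ofReal_exp_pow (x : ℝ) (n : ℕ) :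
    ENNReal.ofReal (exp x) ^ n = ENNReal.ofReal (exp (x * n)) := by
  rw [← ENNReal.ofReal_pow (exp_pos x).le, ← exp_nat_mul, mul_comm]

lemma le_ofReal_exp_toReal {M : ℝ≥0∞} (hM : M ≠ ∞) : M ≤ ENNReal.ofReal (exp M.toReal) :=
  (ENNReal.ofReal_toReal hM).symm.le.trans
    (ENNReal.ofReal_le_ofReal (by linarith [add_one_le_exp M.toReal]))

lemma exists_pow_add_pow_div_le {r s : ℝ} (hr : 0 < r) (hs : 0 < s) {M : ℝ≥0∞} (hM : M ≠ ∞) :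
    ∃ C α, 0 < α ∧ ∀ k : ℕ, ∃ m : ℕ,
      ENNReal.ofReal (exp (-r)) ^ m + M ^ m / ENNReal.ofReal (exp s) ^ k
        ≤ ENNReal.ofReal (C * exp (-α * k)) := by
  set L := M.toReal
  have hML : M ≤ ENNReal.ofReal (exp L) := le_ofReal_exp_toReal hM
  obtain ⟨N, hN⟩ := exists_nat_ge (L / s)
  rw [div_le_iff₀ hs] at hN
  set D := 2 * (N + 1)
  have hD : (0 : ℝ) < D := by positivity
  set α := min (r / D) (s / 2)
  refine ⟨exp r + 1, α, lt_min (by positivity) (by positivity), fun k => ⟨k / D, ?_⟩⟩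
  have hm1 : ((k / D : ℕ) : ℝ) * D ≤ k := by exact_mod_cast Nat.div_mul_le_self k D
  have hm2 : (k : ℝ) < ((k / D : ℕ) + 1) * D := by
    exact_mod_cast (Nat.lt_div_mul_add (by positivity : 0 < D)).trans_eq (by ring)
  have h1 : exp (-r * (k / D : ℕ)) ≤ exp r * exp (-α * k) := by
    rw [← exp_add]
    refine exp_le_exp.2 ?_
    have : α * k ≤ r / D * k := mul_le_mul_of_nonneg_right (min_le_left _ _) (by positivity)
    have : r / D * k ≤ r * ((k / D : ℕ) + 1) := by
      rw [div_mul_eq_mul_div, div_le_iff₀ hD]; nlinarith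
    linarith
  have h2 : exp (L * (k / D : ℕ) - s * k) ≤ exp (-α * k) := by
    refine exp_le_exp.2 ?_
    have : α * k ≤ s / 2 * k := mul_le_mul_of_nonneg_right (min_le_right _ _) (by positivity)
    have : L * (k / D : ℕ) ≤ s * (N + 1) * (k / D : ℕ) :=
      mul_le_mul_of_nonneg_right (by linarith) (by positivity)
    have : s * (N + 1) * (k / D : ℕ) ≤ s * k / 2 := by
      simp only [D] at hm1; push_cast at hm1; nlinarith
    linarith
  calc ENNReal.ofReal (exp (-r)) ^ (k / D) + M ^ (k / D) / ENNReal.ofReal (exp s) ^ k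
      ≤ ENNReal.ofReal (exp (-r)) ^ (k / D) + ENNReal.ofReal (exp L) ^ (k / D)
          / ENNReal.ofReal (exp s) ^ k := by gcongr
    _ = ENNReal.ofReal (exp (-r * (k / D : ℕ)))
          + ENNReal.ofReal (exp (L * (k / D : ℕ) - s * k)) := by
        rw [ofReal_exp_pow, ofReal_exp_pow, ofReal_exp_pow,
          ← ENNReal.ofReal_div_of_pos (exp_pos _), ← exp_sub]
    _ ≤ ENNReal.ofReal (exp r * exp (-α * k)) + ENNReal.ofReal (exp (-α * k)) := by gcongr
    _ = ENNReal.ofReal ((exp r + 1) * exp (-α * k)) := by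
        rw [← ENNReal.ofReal_add (by positivity) (by positivity)]; ring_nf

variable {Ω : Type*}

abbrev pastSigma (V : ℕ → Ω → ℕ) (n : ℕ) : MeasurableSpace Ω :=
  ⨆ i ∈ Finset.range n, MeasurableSpace.comap (V i) ⊤

-- `P(X ≥ k | m) ≤ p k` almost surely, in the integrated form used in the statement.
def IsCondTailBound {m0 : MeasurableSpace Ω} (μ : Measure Ω) (m : MeasurableSpace Ω) (X : Ω → ℕ)
    (p : ℕ → ℝ≥0∞) : Prop :=
  ∀ k A, MeasurableSet[m] A → μ ({ω | k ≤ X ω} ∩ A) ≤ p k * μ A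

lemma measurable_pastSigma {V : ℕ → Ω → ℕ} {i n : ℕ} (h : i < n) :
    Measurable[pastSigma V n] (V i) :=
  Measurable.of_comap_le <| le_iSup₂ (f := fun j (_ : j ∈ Finset.range n) =>
    MeasurableSpace.comap (V j) ⊤) i (Finset.mem_range.2 h)

lemma pastSigma_mono (V : ℕ → Ω → ℕ) : Monotone (pastSigma V) := fun _ _ h =>
  biSup_mono fun _ hi => Finset.range_subset_range.2 h hi

lemma pastSigma_le [m0 : MeasurableSpace Ω] {V : ℕ → Ω → ℕ} (hV : ∀ n, Measurable (V n)) (n : ℕ) :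
    pastSigma V n ≤ m0 :=
  iSup₂_le fun i _ => (hV i).comap_le

section

variable {m m0 : MeasurableSpace Ω} {μ : Measure Ω}

lemma setLIntegral_le_mul_lintegral (hm : m ≤ m0) {E : Set Ω} {p : ℝ≥0∞}
    (hE : ∀ A, MeasurableSet[m] A → μ (E ∩ A) ≤ p * μ A) {f : Ω → ℝ≥0∞} (hf : Measurable[m] f) :
    ∫⁻ ω in E, f ω ∂μ ≤ p * ∫⁻ ω, f ω ∂μ := by
  have hle : (μ.restrict E).trim hm ≤ p • μ.trim hm := by
    refine Measure.le_iff.2 fun A hA => ?_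
    rw [trim_measurableSet_eq hm hA, Measure.smul_apply, trim_measurableSet_eq hm hA,
      Measure.restrict_apply (hm A hA), inter_comm, smul_eq_mul]
    exact hE A hA
  calc ∫⁻ ω in E, f ω ∂μ = ∫⁻ ω, f ω ∂(μ.restrict E).trim hm := (lintegral_trim hm hf).symm
    _ ≤ ∫⁻ ω, f ω ∂(p • μ.trim hm) := lintegral_mono' hle le_rfl
    _ = p * ∫⁻ ω, f ω ∂μ := by rw [lintegral_smul_measure, lintegral_trim hm hf, smul_eq_mul]

lemma lintegral_tsum_indicator_le {ι : Type*} [Countable ι] (hm : m ≤ m0) {X : Ω → ℕ}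
    (hX : Measurable X) {p : ℕ → ℝ≥0∞} (htail : IsCondTailBound μ m X p) (κ : ι → ℕ)
    {f : ι → Ω → ℝ≥0∞} (hf : ∀ i, Measurable[m] (f i)) :
    ∫⁻ ω, ∑' i, {ω | κ i ≤ X ω}.indicator (f i) ω ∂μ ≤ ∫⁻ ω, ∑' i, p (κ i) * f i ω ∂μ := by
  have hset (i : ι) : MeasurableSet {ω | κ i ≤ X ω} := measurableSet_le measurable_const hX
  rw [lintegral_tsum fun i => (((hf i).mono hm le_rfl).indicator (hset i)).aemeasurable,
    lintegral_tsum fun i => (((hf i).mono hm le_rfl).const_mul _).aemeasurable]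
  refine ENNReal.tsum_le_tsum fun i => ?_
  rw [lintegral_indicator (hset i), lintegral_const_mul _ ((hf i).mono hm le_rfl)]
  exact setLIntegral_le_mul_lintegral hm (htail (κ i)) (hf i)

end

lemma measurable_overshoot (X : ℕ → Ω → ℕ) (m : ℕ) :
    Measurable[pastSigma X m] fun ω => overshoot (fun n => X n ω) m := by
  induction m with
  | zero => exact measurable_const
  | succ m ih =>
    exact (measurable_of_countable fun v : ℕ × ℕ =>
      if v.1 = 0 then 0 else max (v.1 - 1) (v.2 - 1)).comp
        ((ih.mono (pastSigma_mono X m.le_succ) le_rfl).prodMk (measurable_pastSigma m.lt_succ_self))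

lemma measurable_partialSum (R : ℕ → Ω → ℕ) (m : ℕ) :
    Measurable[pastSigma R m] fun ω => ∑ j ∈ Finset.range m, R j ω :=
  Finset.measurable_sum _ fun _ hj => measurable_pastSigma (Finset.mem_range.1 hj)

lemma setOf_le_sum_firstUncovered_subset (X R : ℕ → Ω → ℕ) (m k : ℕ) :
    {ω | k ≤ ∑ j ∈ Finset.range (firstUncovered fun n => X n ω), R j ω}
      ⊆ {ω | overshoot (fun n => X n ω) m ≠ 0} ∪ {ω | k ≤ ∑ j ∈ Finset.range m, R j ω} := by
  intro ω (hω : k ≤ _)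
  by_cases h : overshoot (fun n => X n ω) m = 0
  · exact Or.inr (show k ≤ _ from hω.trans (Finset.sum_le_sum_of_subset
      (Finset.range_subset_range.2 (firstUncovered_le_of_overshoot_eq_zero h))))
  · exact Or.inl h

-- With `g w = ∑ i < w, δ i`, this gives `E[g (max (w + 1) X - 1)] ≤ ρ * g (w + 1)` whenever
-- `P(X ≥ k) ≤ p k` for all `k`.
def IsDriftPotential (p : ℕ → ℝ≥0∞) (ρ : ℝ≥0∞) (δ : ℕ → ℝ≥0∞) : Prop :=
  ∀ w, ∑ i ∈ Finset.range w, δ i + ∑' i, (if w ≤ i then p (i + 2) * δ i else 0)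
    ≤ ρ * ∑ i ∈ Finset.range (w + 1), δ i

variable [m0 : MeasurableSpace Ω] {μ : Measure Ω}

lemma lintegral_potential_overshoot_succ_le {X : ℕ → Ω → ℕ} (hX : ∀ n, Measurable (X n)) {m : ℕ}
    {p : ℕ → ℝ≥0∞} (htail : IsCondTailBound μ (pastSigma X m) (X m) p) {ρ : ℝ≥0∞}
    {δ : ℕ → ℝ≥0∞} (hδ : IsDriftPotential p ρ δ) :
    ∫⁻ ω, ∑ i ∈ Finset.range (overshoot (fun n => X n ω) (m + 1)), δ i ∂μ
      ≤ ρ * ∫⁻ ω, ∑ i ∈ Finset.range (overshoot (fun n => X n ω) m), δ i ∂μ := by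
  set U := fun ω => overshoot (fun n => X n ω) m
  have hU : Measurable[pastSigma X m] U := measurable_overshoot X m
  have hU0 : Measurable U := hU.mono (pastSigma_le hX m) le_rfl
  set w : ℕ → Ω → ℝ≥0∞ := fun i ω => if U ω ≠ 0 ∧ U ω - 1 ≤ i then δ i else 0
  have hw (i : ℕ) : Measurable[pastSigma X m] (w i) :=
    (measurable_from_nat (f := fun v => if v ≠ 0 ∧ v - 1 ≤ i then δ i else 0)).comp hU
  set first : Ω → ℝ≥0∞ := fun ω => if U ω = 0 then 0 else ∑ i ∈ Finset.range (U ω - 1), δ i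
  have hfirst : Measurable first :=
    (measurable_from_nat (f := fun v =>
      if v = 0 then 0 else ∑ i ∈ Finset.range (v - 1), δ i)).comp hU0
  calc ∫⁻ ω, ∑ i ∈ Finset.range (overshoot (fun n => X n ω) (m + 1)), δ i ∂μ
      ≤ ∫⁻ ω, first ω + ∑' i, {ω | i + 2 ≤ X m ω}.indicator (w i) ω ∂μ := by
        refine lintegral_mono fun ω => (sum_range_overshoot_succ_le _ m δ).trans_eq ?_
        simp only [indicator_apply, mem_ofPred_eq, ite_and, first, w, U]
    _ ≤ ∫⁻ ω, first ω + ∑' i, p (i + 2) * w i ω ∂μ := by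
        rw [lintegral_add_left hfirst, lintegral_add_left hfirst]
        exact add_le_add le_rfl
          (lintegral_tsum_indicator_le (pastSigma_le hX m) (hX m) htail (· + 2) hw)
    _ ≤ ∫⁻ ω, ρ * ∑ i ∈ Finset.range (U ω), δ i ∂μ := by
        refine lintegral_mono fun ω => ?_
        by_cases h : U ω = 0
        · simp [first, w, h]
        · obtain ⟨v, hv⟩ := Nat.exists_eq_succ_of_ne_zero h
          simpa [first, w, hv, mul_ite] using hδ v
    _ = ρ * ∫⁻ ω, ∑ i ∈ Finset.range (U ω), δ i ∂μ :=
        lintegral_const_mul _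
          ((measurable_from_nat (f := fun v => ∑ i ∈ Finset.range v, δ i)).comp hU0)

lemma measure_overshoot_ne_zero_le [IsProbabilityMeasure μ] {X : ℕ → Ω → ℕ}
    (hX : ∀ n, Measurable (X n)) {p : ℕ → ℝ≥0∞}
    (htail : ∀ n, IsCondTailBound μ (pastSigma X n) (X n) p) {ρ : ℝ≥0∞} {δ : ℕ → ℝ≥0∞}
    (hδ : IsDriftPotential p ρ δ) (hδ0 : δ 0 ≠ 0) (hδ0' : δ 0 ≠ ∞) (m : ℕ) :
    μ {ω | overshoot (fun n => X n ω) m ≠ 0} ≤ ρ ^ m := by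
  have hpot (m : ℕ) :
      ∫⁻ ω, ∑ i ∈ Finset.range (overshoot (fun n => X n ω) m), δ i ∂μ ≤ ρ ^ m * δ 0 := by
    induction m with
    | zero => simp [overshoot]
    | succ m ih =>
      calc _ ≤ ρ * ∫⁻ ω, ∑ i ∈ Finset.range (overshoot (fun n => X n ω) m), δ i ∂μ :=
            lintegral_potential_overshoot_succ_le hX (htail m) hδ
        _ ≤ ρ ^ (m + 1) * δ 0 := by rw [pow_succ', mul_assoc]; gcongr
  have hmarkov : δ 0 * μ {ω | overshoot (fun n => X n ω) m ≠ 0}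
      ≤ ∫⁻ ω, ∑ i ∈ Finset.range (overshoot (fun n => X n ω) m), δ i ∂μ := by
    refine le_trans ?_ (mul_meas_ge_le_lintegral₀ ((measurable_from_nat (f := fun v =>
      ∑ i ∈ Finset.range v, δ i)).comp ((measurable_overshoot X m).mono (pastSigma_le hX m)
        le_rfl)).aemeasurable (δ 0))
    refine mul_le_mul_right (measure_mono fun ω hω => ?_) _
    exact Finset.single_le_sum (f := δ) (fun _ _ => zero_le)
      (Finset.mem_range.2 (Nat.pos_of_ne_zero hω))
  rw [← ENNReal.mul_le_mul_iff_right hδ0 hδ0', mul_comm (δ 0) (ρ ^ m)]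
  exact hmarkov.trans (hpot m)

lemma lintegral_pow_partialSum_le [IsProbabilityMeasure μ] {R : ℕ → Ω → ℕ}
    (hR : ∀ n, Measurable (R n)) {p : ℕ → ℝ≥0∞}
    (htail : ∀ n, IsCondTailBound μ (pastSigma R n) (R n) p) {b : ℝ≥0∞} (hb : 1 ≤ b) (m : ℕ) :
    ∫⁻ ω, b ^ (∑ j ∈ Finset.range m, R j ω) ∂μ ≤ (1 + ∑' i, p (i + 1) * ((b - 1) * b ^ i)) ^ m := by
  induction m with
  | zero => simp
  | succ m ih =>
    set S := fun ω => b ^ (∑ j ∈ Finset.range m, R j ω)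
    have hS : Measurable[pastSigma R m] S :=
      (measurable_from_nat (f := fun v => b ^ v)).comp (measurable_partialSum R m)
    have hS0 : Measurable S := hS.mono (pastSigma_le hR m) le_rfl
    calc ∫⁻ ω, b ^ (∑ j ∈ Finset.range (m + 1), R j ω) ∂μ
        = ∫⁻ ω, S ω
            + ∑' i, {ω | i + 1 ≤ R m ω}.indicator (fun ω => (b - 1) * b ^ i * S ω) ω ∂μ := by
          refine lintegral_congr fun ω => ?_
          rw [Finset.sum_range_succ, pow_add, pow_eq_one_add_sum_range hb (R m ω), mul_add, mul_one,
            Finset.mul_sum, tsum_eq_sum (s := Finset.range (R m ω)) fun i hi => ?_]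
          · refine congrArg _ (Finset.sum_congr rfl fun i hi => ?_)
            rw [indicator_of_mem (by simpa [Nat.add_one_le_iff] using hi), mul_comm]
          · exact indicator_of_notMem (by simpa [Nat.add_one_le_iff] using hi) _
      _ ≤ ∫⁻ ω, S ω + ∑' i, p (i + 1) * ((b - 1) * b ^ i * S ω) ∂μ := by
          rw [lintegral_add_left hS0, lintegral_add_left hS0]
          exact add_le_add le_rfl (lintegral_tsum_indicator_le (pastSigma_le hR m) (hR m)
            (htail m) (· + 1) fun i => hS.const_mul _)
      _ = (1 + ∑' i, p (i + 1) * ((b - 1) * b ^ i)) * ∫⁻ ω, S ω ∂μ := by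
          rw [← lintegral_const_mul _ hS0]
          refine lintegral_congr fun ω => ?_
          rw [add_mul, one_mul, ← ENNReal.tsum_mul_right]
          simp only [mul_assoc]
      _ ≤ (1 + ∑' i, p (i + 1) * ((b - 1) * b ^ i)) ^ (m + 1) := by
          rw [pow_succ']
          gcongr

lemma measure_le_partialSum_le [IsProbabilityMeasure μ] {R : ℕ → Ω → ℕ}
    (hR : ∀ n, Measurable (R n)) {p : ℕ → ℝ≥0∞}
    (htail : ∀ n, IsCondTailBound μ (pastSigma R n) (R n) p) {b : ℝ≥0∞} (hb : 1 ≤ b)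
    (hb' : b ≠ ∞) (m k : ℕ) :
    μ {ω | k ≤ ∑ j ∈ Finset.range m, R j ω}
      ≤ (1 + ∑' i, p (i + 1) * ((b - 1) * b ^ i)) ^ m / b ^ k := by
  rw [ENNReal.le_div_iff_mul_le (Or.inl (pow_ne_zero _ (one_pos.trans_le hb).ne'))
    (Or.inl (ENNReal.pow_ne_top hb')), mul_comm]
  calc b ^ k * μ {ω | k ≤ ∑ j ∈ Finset.range m, R j ω}
      ≤ b ^ k * μ {ω | b ^ k ≤ b ^ (∑ j ∈ Finset.range m, R j ω)} :=
        mul_le_mul_right (measure_mono fun ω hω => pow_le_pow_right₀ hb hω) _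
    _ ≤ ∫⁻ ω, b ^ (∑ j ∈ Finset.range m, R j ω) ∂μ :=
        mul_meas_ge_le_lintegral₀ ((measurable_from_nat (f := fun v => b ^ v)).comp
          ((measurable_partialSum R m).mono (pastSigma_le hR m) le_rfl)).aemeasurable _
    _ ≤ _ := lintegral_pow_partialSum_le hR htail hb m

lemma measure_le_sum_firstUncovered_le {X R : ℕ → Ω → ℕ} (hXR : ∀ᵐ ω ∂μ, X 0 ω ≤ R 0 ω)
    {k : ℕ} (hk : 1 ≤ k) :
    μ {ω | k ≤ ∑ j ∈ Finset.range (firstUncovered fun n => X n ω), R j ω}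
      ≤ μ {ω | 1 ≤ R 0 ω} := by
  refine measure_mono_ae (hXR.mono fun ω hXR0 (hZ : k ≤ _) => ?_)
  show 1 ≤ R 0 ω
  by_contra! hR0
  have := Finset.sum_le_sum_of_subset (f := fun j => R j ω)
    (Finset.range_subset_range.2 (firstUncovered_le_one (x := fun n => X n ω) (by omega)))
  simp only [Finset.sum_range_one] at this
  omega

lemma exists_isDriftPotential {c : ℝ} (hc : 0 < c) :
    ∃ (δ : ℕ → ℝ≥0∞) (r : ℝ), 0 < r ∧ δ 0 ≠ 0 ∧ δ 0 ≠ ∞ ∧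
      IsDriftPotential (fun k => ENNReal.ofReal (exp (-c * k))) (ENNReal.ofReal (exp (-r))) δ := by
  obtain ⟨δ, ρ, hδ, hρ0, hρ1, hdrift⟩ :=
    exists_drift_potential_real (exp_pos (-c)) (exp_lt_one_iff.2 (neg_neg_of_pos hc))
  refine ⟨fun i => ENNReal.ofReal (δ i), -log ρ, neg_pos.2 (log_neg hρ0 hρ1),
    by simpa using hδ 0, ENNReal.ofReal_ne_top, fun w => ?_⟩
  obtain ⟨T, hT, hle⟩ := hdrift w
  have hterm (i : ℕ) :
      (if w ≤ i then ENNReal.ofReal (exp (-c * ↑(i + 2))) * ENNReal.ofReal (δ i) else 0)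
        = ENNReal.ofReal (if w ≤ i then exp (-c) ^ (i + 2) * δ i else 0) := by
    split_ifs
    · rw [← ENNReal.ofReal_mul (exp_pos _).le, mul_comm (-c), exp_nat_mul]
    · exact ENNReal.ofReal_zero.symm
  simp only [hterm]
  rw [← ENNReal.ofReal_tsum_of_nonneg (fun i => by
    split_ifs; exacts [mul_nonneg (by positivity) (hδ i).le, le_rfl]) hT.summable,
    hT.tsum_eq, neg_neg, exp_log hρ0,
    ← ENNReal.ofReal_sum_of_nonneg fun i _ => (hδ i).le,
    ← ENNReal.ofReal_sum_of_nonneg fun i _ => (hδ i).le,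
    ← ENNReal.ofReal_add (Finset.sum_nonneg fun i _ => (hδ i).le) (hT.nonneg fun i => by
      split_ifs; exacts [mul_nonneg (by positivity) (hδ i).le, le_rfl]),
    ← ENNReal.ofReal_mul hρ0.le]
  exact ENNReal.ofReal_le_ofReal hle

lemma one_add_tsum_exp_ne_top {c : ℝ} (hc : 0 < c) :
    1 + ∑' i : ℕ, ENNReal.ofReal (exp (-c * ↑(i + 1)))
      * ((ENNReal.ofReal (exp (c / 2)) - 1) * ENNReal.ofReal (exp (c / 2)) ^ i) ≠ ∞ := by
  set b := ENNReal.ofReal (exp (c / 2))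
  have hx : ENNReal.ofReal (exp (-(c / 2))) < 1 :=
    ENNReal.ofReal_lt_one.2 (exp_lt_one_iff.2 (by linarith))
  have hterm (i : ℕ) : ENNReal.ofReal (exp (-c * ↑(i + 1))) * ((b - 1) * b ^ i)
      ≤ b * ENNReal.ofReal (exp (-(c / 2))) ^ i :=
    calc _ ≤ ENNReal.ofReal (exp (-c * ↑(i + 1))) * (b * b ^ i) := by gcongr; exact tsub_le_self
      _ = b * ENNReal.ofReal (exp (-c * ↑(i + 1) + c / 2 * i)) := by
          rw [ofReal_exp_pow, exp_add, ENNReal.ofReal_mul (exp_pos _).le]; ring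
      _ ≤ b * ENNReal.ofReal (exp (-(c / 2))) ^ i := by
          rw [ofReal_exp_pow]; gcongr; push_cast; nlinarith
  refine ENNReal.add_ne_top.2
    ⟨ENNReal.one_ne_top, ne_top_of_le_ne_top ?_ (ENNReal.tsum_le_tsum hterm)⟩
  rw [ENNReal.tsum_mul_left, ENNReal.tsum_geometric]
  exact ENNReal.mul_ne_top ENNReal.ofReal_ne_top (ENNReal.inv_ne_top.2 (tsub_pos_of_lt hx).ne')

end GeometricSumTail

open GeometricSumTail

/-- if `(X_i)` and `(R_i)` are ℕ-valued with `X_i ≤ R_i`, conditional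
exponential tails and conditional probability of `X_n ∈ {0,1}` bounded below, then with
`D = ⋃_n {n+1, …, n+X_n-1}`, `Y = inf{i ≥ 1 : i ∉ D}` and `Z = Σ_{i<Y} R_i`, one has
`P(Z ≥ k) ≤ e^{-ĉk}` for a constant `ĉ > 0` determined by `c` alone.
The conditional bounds are expressed against all events of the relevant σ-algebras. -/
theorem geometric_sum_exponential_tail :
    ∀ c : ℝ, 0 < c → ∃ chat : ℝ, 0 < chat ∧
      ∀ (Ω : Type) [MeasurableSpace Ω] (P : Measure Ω), IsProbabilityMeasure P →
        ∀ X R : ℕ → Ω → ℕ,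
          (∀ n, Measurable (X n)) → (∀ n, Measurable (R n)) →
          (∀ n, ∀ᵐ ω ∂P, X n ω ≤ R n ω) →
          (∀ n k : ℕ, ∀ A : Set Ω,
            MeasurableSet[⨆ i ∈ Finset.range n, MeasurableSpace.comap (X i) ⊤] A →
            P ({ω | k ≤ X n ω} ∩ A) ≤ ENNReal.ofReal (Real.exp (-c * k)) * P A) →
          (∀ n : ℕ, ∀ A : Set Ω,
            MeasurableSet[⨆ i ∈ Finset.range n, MeasurableSpace.comap (X i) ⊤] A →
            ENNReal.ofReal c * P A ≤ P ({ω | X n ω ≤ 1} ∩ A)) →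
          (∀ n k : ℕ, ∀ A : Set Ω,
            MeasurableSet[⨆ i ∈ Finset.range n, MeasurableSpace.comap (R i) ⊤] A →
            P ({ω | k ≤ R n ω} ∩ A) ≤ ENNReal.ofReal (Real.exp (-c * k)) * P A) →
          ∀ k : ℕ,
            P {ω | k ≤ ∑ j ∈ Finset.range
                (sInf {i | 1 ≤ i ∧ ∀ n, ¬(n < i ∧ i < n + X n ω)}), R j ω}
              ≤ ENNReal.ofReal (Real.exp (-chat * k)) := by
  intro c hc
  obtain ⟨δ, r, hr, hδ0, hδ0', hδ⟩ := exists_isDriftPotential hc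
  obtain ⟨C, α, hα, hsplit⟩ :=
    exists_pow_add_pow_div_le hr (half_pos hc) (one_add_tsum_exp_ne_top hc)
  obtain ⟨γ, hγ, hdecay⟩ := exists_exp_bound_of_le_one_of_le (C := C) hα hc
  refine ⟨γ, hγ, fun Ω _ P _ X R hX hR hXR htX _ htR k =>
    hdecay k _ prob_le_one (fun hk => ?_) ?_⟩
  · calc _ ≤ P {ω | 1 ≤ R 0 ω} := measure_le_sum_firstUncovered_le (hXR 0) hk
      _ ≤ ENNReal.ofReal (exp (-c)) := by simpa using htR 0 1 univ MeasurableSet.univ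
  · obtain ⟨m, hm⟩ := hsplit k
    calc _ ≤ P {ω | overshoot (fun n => X n ω) m ≠ 0}
          + P {ω | k ≤ ∑ j ∈ Finset.range m, R j ω} :=
          (measure_mono (setOf_le_sum_firstUncovered_subset X R m k)).trans (measure_union_le _ _)
      _ ≤ _ := add_le_add (measure_overshoot_ne_zero_le hX htX hδ hδ0 hδ0' m)
          (measure_le_partialSum_le hR htR (ENNReal.one_le_ofReal.2 (one_le_exp (by positivity)))
            ENNReal.ofReal_ne_top m k)
      _ ≤ _ := hm
end
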